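/- arXiv:2210.10422 — 6 statements merged into one kernel-verified Lean document; each statement's English description precedes it below -/
import Mathlib

section
/- Let P be a homothetic packing of n squares with contact graph G = ([n], E). Then the subgraph ([n], E_x) of x-direction contacts and the subgraph ([n], E_y) of y-direction contacts are both triangle-free. -/
open Finset Real

noncomputable section

/-- The standard square `[-1,1] × [-1,1]`. -/
def stdSquare : Set (ℝ × ℝ) := {q : ℝ × ℝ | -1 ≤ q.1 ∧ q.1 ≤ 1 ∧ -1 ≤ q.2 ∧ q.2 ≤ 1}

/-- The homothetic copy `r • S + p` of the standard square (radius `r`, centre `p`). -/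
def homSq (r : ℝ) (p : ℝ × ℝ) : Set (ℝ × ℝ) := (fun q => r • q + p) '' stdSquare

/-- A homothetic packing of `n` squares with radii `r` and centres `p`:
all radii are positive and the interiors of the squares are pairwise disjoint. -/
def IsSqPacking {n : ℕ} (r : Fin n → ℝ) (p : Fin n → ℝ × ℝ) : Prop :=
  (∀ i, 0 < r i) ∧
  ∀ i j, i ≠ j → interior (homSq (r i) (p i)) ∩ interior (homSq (r j) (p j)) = ∅

/-- Squares `i` and `j` are distinct and touch: an edge of the contact graph. -/
def SqContact {n : ℕ} (r : Fin n → ℝ) (p : Fin n → ℝ × ℝ) (i j : Fin n) : Prop :=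
  i ≠ j ∧ (homSq (r i) (p i) ∩ homSq (r j) (p j)).Nonempty

/-- The contact graph of a homothetic square packing. -/
def contactGraph {n : ℕ} (r : Fin n → ℝ) (p : Fin n → ℝ × ℝ) : SimpleGraph (Fin n) where
  Adj i j := SqContact r p i j
  symm := by
    constructor
    intro i j h
    refine ⟨h.1.symm, ?_⟩
    rw [Set.inter_comm]
    exact h.2
  loopless := ⟨fun i h => h.1 rfl⟩

/-- `{i,j}` is an x-direction contact: the squares touch and
`r i + r j = |x_i - x_j| ≥ |y_i - y_j|`. -/
def XContact {n : ℕ} (r : Fin n → ℝ) (p : Fin n → ℝ × ℝ) (i j : Fin n) : Prop :=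
  SqContact r p i j ∧ r i + r j = |(p i).1 - (p j).1| ∧
    |(p i).2 - (p j).2| ≤ |(p i).1 - (p j).1|

/-- `{i,j}` is a y-direction contact: the squares touch and
`r i + r j = |y_i - y_j| ≥ |x_i - x_j|`. -/
def YContact {n : ℕ} (r : Fin n → ℝ) (p : Fin n → ℝ × ℝ) (i j : Fin n) : Prop :=
  SqContact r p i j ∧ r i + r j = |(p i).2 - (p j).2| ∧
    |(p i).1 - (p j).1| ≤ |(p i).2 - (p j).2|

/-- The graph `([n], E_x)` of x-direction contacts. -/
def xGraph {n : ℕ} (r : Fin n → ℝ) (p : Fin n → ℝ × ℝ) : SimpleGraph (Fin n) where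
  Adj i j := XContact r p i j
  symm := by
    constructor
    intro i j h
    refine ⟨(contactGraph r p).adj_symm h.1, ?_, ?_⟩
    · rw [abs_sub_comm, add_comm]; exact h.2.1
    · rw [abs_sub_comm ((p j).2), abs_sub_comm ((p j).1)]; exact h.2.2
  loopless := ⟨fun i h => h.1.1 rfl⟩

/-- The graph `([n], E_y)` of y-direction contacts. -/
def yGraph {n : ℕ} (r : Fin n → ℝ) (p : Fin n → ℝ × ℝ) : SimpleGraph (Fin n) where
  Adj i j := YContact r p i j
  symm := by
    constructor
    intro i j h
    refine ⟨(contactGraph r p).adj_symm h.1, ?_, ?_⟩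
    · rw [abs_sub_comm, add_comm]; exact h.2.1
    · rw [abs_sub_comm ((p j).2), abs_sub_comm ((p j).1)]; exact h.2.2
  loopless := ⟨fun i h => h.1.1 rfl⟩

/-- Positive radii satisfy the weak generic condition if the only `σ : [n] → {-1,0,1}`
with at least 4 zeroes satisfying `Σ σ i * r i = 0` is the zero function. -/
def WeakGeneric {n : ℕ} (r : Fin n → ℝ) : Prop :=
  ∀ σ : Fin n → ℤ, (∀ i, σ i = -1 ∨ σ i = 0 ∨ σ i = 1) →
    4 ≤ (Finset.univ.filter fun i => σ i = 0).card →
    (∑ i, (σ i : ℝ) * r i) = 0 → σ = 0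

/-- `z` is a corner of the axis-parallel square with radius `r` and centre `c`. -/
def IsSqCorner (r : ℝ) (c z : ℝ × ℝ) : Prop := |z.1 - c.1| = r ∧ |z.2 - c.2| = r

/-- The four squares `i, j, k, l` share a corner: their common intersection is a single
point which is a corner of each of the four squares. -/
def ShareCorner {n : ℕ} (r : Fin n → ℝ) (p : Fin n → ℝ × ℝ) (i j k l : Fin n) : Prop :=
  ∃ z : ℝ × ℝ,
    homSq (r i) (p i) ∩ homSq (r j) (p j) ∩ homSq (r k) (p k) ∩ homSq (r l) (p l) = {z} ∧
    IsSqCorner (r i) (p i) z ∧ IsSqCorner (r j) (p j) z ∧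
    IsSqCorner (r k) (p k) z ∧ IsSqCorner (r l) (p l) z

lemma no_triangle_key (ri rj rk xi xj xk : ℝ) (hi : 0 < ri) (hj : 0 < rj) (hk : 0 < rk)
    (h1 : ri + rj = |xi - xj|) (h2 : ri + rk = |xi - xk|) (h3 : rj + rk = |xj - xk|) :
    False := by
  rcases abs_cases (xi - xj) with ⟨e1, _⟩ | ⟨e1, _⟩ <;>
  rcases abs_cases (xi - xk) with ⟨e2, _⟩ | ⟨e2, _⟩ <;>
  rcases abs_cases (xj - xk) with ⟨e3, _⟩ | ⟨e3, _⟩ <;> linarith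

/-- **Lemma 2.1.** In a homothetic square packing, the subgraphs of x-direction and
y-direction contacts are triangle-free. -/
theorem xGraph_yGraph_triangleFree (n : ℕ) (r : Fin n → ℝ) (p : Fin n → ℝ × ℝ)
    (hP : IsSqPacking r p) :
    (xGraph r p).CliqueFree 3 ∧ (yGraph r p).CliqueFree 3 := by
  constructor <;>
  · intro t ht
    obtain ⟨hclique, hcard⟩ := ht
    obtain ⟨a, b, c, hab, hac, hbc, rfl⟩ := Finset.card_eq_three.mp hcard
    have h1 := hclique (by simp) (by simp) hab
    have h2 := hclique (by simp) (by simp) hac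
    have h3 := hclique (by simp) (by simp) hbc
    exact no_triangle_key (r a) (r b) (r c) _ _ _ (hP.1 a) (hP.1 b) (hP.1 c)
      h1.2.1 h2.2.1 h3.2.1
end
end

section
/- Let P be a homothetic packing of n squares with contact graph G = ([n], E). If {i, j, k} is a clique of size 3 in G, then the intersection S_i ∩ S_j ∩ S_k contains exactly one point. -/
open Finset Real

noncomputable section

lemma mem_homSq {r : ℝ} (hr : 0 < r) (p q : ℝ × ℝ) :
    q ∈ homSq r p ↔ |q.1 - p.1| ≤ r ∧ |q.2 - p.2| ≤ r := by
  constructor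
  · rintro ⟨s, ⟨h1, h2, h3, h4⟩, rfl⟩
    have e1 : (r • s + p).1 - p.1 = r * s.1 := by
      simp [Prod.smul_def, smul_eq_mul]
    have e2 : (r • s + p).2 - p.2 = r * s.2 := by
      simp [Prod.smul_def, smul_eq_mul]
    rw [e1, e2, abs_mul, abs_mul, abs_of_pos hr]
    constructor <;> nlinarith [abs_le.mpr ⟨h1, h2⟩, abs_le.mpr ⟨h3, h4⟩,
      abs_nonneg s.1, abs_nonneg s.2]
  · rintro ⟨h1, h2⟩
    have a1 := abs_le.mp h1
    have a2 := abs_le.mp h2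
    refine ⟨((q.1 - p.1)/r, (q.2 - p.2)/r), ⟨?_, ?_, ?_, ?_⟩, ?_⟩
    · rw [le_div_iff₀ hr]; linarith
    · rw [div_le_one hr]; linarith
    · rw [le_div_iff₀ hr]; linarith
    · rw [div_le_one hr]; linarith
    · have hr' := hr.ne'
      ext <;> simp [Prod.smul_def, smul_eq_mul] <;> field_simp <;> ring

lemma ball_subset_interior {r : ℝ} (hr : 0 < r) (p : ℝ × ℝ) :
    Metric.ball p r ⊆ interior (homSq r p) := by
  apply interior_maximal _ Metric.isOpen_ball
  intro q hq
  rw [Metric.mem_ball, Prod.dist_eq, max_lt_iff, Real.dist_eq, Real.dist_eq] at hq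
  exact (mem_homSq hr p q).mpr ⟨hq.1.le, hq.2.le⟩

lemma weight_lt {a b r s : ℝ} (hr : 0 < r) (hs : 0 < s) (h : |a - b| < r + s) :
    |(a*s + b*r)/(r+s) - a| < r ∧ |(a*s + b*r)/(r+s) - b| < s := by
  have hsum : (0:ℝ) < r + s := by linarith
  have e1 : (a*s + b*r)/(r+s) - a = r*(b-a)/(r+s) := by field_simp; ring
  have e2 : (a*s + b*r)/(r+s) - b = s*(a-b)/(r+s) := by field_simp; ring
  have hab : |b - a| < r + s := by rwa [abs_sub_comm]
  constructor
  · rw [e1, abs_div, abs_mul, abs_of_pos hr, abs_of_pos hsum, div_lt_iff₀ hsum]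
    nlinarith
  · rw [e2, abs_div, abs_mul, abs_of_pos hs, abs_of_pos hsum, div_lt_iff₀ hsum]
    nlinarith

lemma not_both_lt {r1 r2 : ℝ} (h1 : 0 < r1) (h2 : 0 < r2) {p1 p2 : ℝ × ℝ}
    (hd : interior (homSq r1 p1) ∩ interior (homSq r2 p2) = ∅)
    (ha : |p1.1 - p2.1| < r1 + r2) (hb : |p1.2 - p2.2| < r1 + r2) : False := by
  set t : ℝ × ℝ := ((p1.1*r2 + p2.1*r1)/(r1+r2), (p1.2*r2 + p2.2*r1)/(r1+r2)) with ht
  obtain ⟨hx1, hx2⟩ := weight_lt h1 h2 ha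
  obtain ⟨hy1, hy2⟩ := weight_lt h1 h2 hb
  have ht1 : t ∈ Metric.ball p1 r1 := by
    rw [Metric.mem_ball, Prod.dist_eq, max_lt_iff, Real.dist_eq, Real.dist_eq]
    exact ⟨hx1, hy1⟩
  have ht2 : t ∈ Metric.ball p2 r2 := by
    rw [Metric.mem_ball, Prod.dist_eq, max_lt_iff, Real.dist_eq, Real.dist_eq]
    exact ⟨hx2, hy2⟩
  exact Set.eq_empty_iff_forall_notMem.mp hd t
    ⟨ball_subset_interior h1 p1 ht1, ball_subset_interior h2 p2 ht2⟩

lemma contact_le {r1 r2 : ℝ} (h1 : 0 < r1) (h2 : 0 < r2) {p1 p2 : ℝ × ℝ}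
    (h : (homSq r1 p1 ∩ homSq r2 p2).Nonempty) :
    |p1.1 - p2.1| ≤ r1 + r2 ∧ |p1.2 - p2.2| ≤ r1 + r2 := by
  obtain ⟨q, hq1, hq2⟩ := h
  rw [mem_homSq h1] at hq1
  rw [mem_homSq h2] at hq2
  have A := abs_le.mp hq1.1; have B := abs_le.mp hq1.2
  have C := abs_le.mp hq2.1; have D := abs_le.mp hq2.2
  constructor <;> rw [abs_le] <;> constructor <;> linarith

lemma key_pair_x {r1 r2 : ℝ} (h1 : 0 < r1) (h2 : 0 < r2) {p1 p2 : ℝ × ℝ}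
    (hd : interior (homSq r1 p1) ∩ interior (homSq r2 p2) = ∅)
    {z w : ℝ × ℝ} (hz1 : z ∈ homSq r1 p1) (hz2 : z ∈ homSq r2 p2)
    (hw1 : w ∈ homSq r1 p1) (hw2 : w ∈ homSq r2 p2)
    (hne : z.1 ≠ w.1) : |p1.2 - p2.2| = r1 + r2 := by
  rw [mem_homSq h1] at hz1 hw1
  rw [mem_homSq h2] at hz2 hw2
  have hble : |p1.2 - p2.2| ≤ r1 + r2 := by
    have A := abs_le.mp hz1.2; have B := abs_le.mp hz2.2
    rw [abs_le]; constructor <;> linarith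
  have halt : |p1.1 - p2.1| < r1 + r2 := by
    have A := abs_le.mp hz1.1; have B := abs_le.mp hz2.1
    have C := abs_le.mp hw1.1; have D := abs_le.mp hw2.1
    rcases lt_or_gt_of_ne hne with h | h <;>
      (rw [abs_lt]; constructor <;> linarith)
  by_contra hne2
  exact not_both_lt h1 h2 hd halt (lt_of_le_of_ne hble hne2)

lemma key_pair_y {r1 r2 : ℝ} (h1 : 0 < r1) (h2 : 0 < r2) {p1 p2 : ℝ × ℝ}
    (hd : interior (homSq r1 p1) ∩ interior (homSq r2 p2) = ∅)
    {z w : ℝ × ℝ} (hz1 : z ∈ homSq r1 p1) (hz2 : z ∈ homSq r2 p2)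
    (hw1 : w ∈ homSq r1 p1) (hw2 : w ∈ homSq r2 p2)
    (hne : z.2 ≠ w.2) : |p1.1 - p2.1| = r1 + r2 := by
  rw [mem_homSq h1] at hz1 hw1
  rw [mem_homSq h2] at hz2 hw2
  have hble : |p1.1 - p2.1| ≤ r1 + r2 := by
    have A := abs_le.mp hz1.1; have B := abs_le.mp hz2.1
    rw [abs_le]; constructor <;> linarith
  have halt : |p1.2 - p2.2| < r1 + r2 := by
    have A := abs_le.mp hz1.2; have B := abs_le.mp hz2.2
    have C := abs_le.mp hw1.2; have D := abs_le.mp hw2.2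
    rcases lt_or_gt_of_ne hne with h | h <;>
      (rw [abs_lt]; constructor <;> linarith)
  by_contra hne2
  exact not_both_lt h1 h2 hd (lt_of_le_of_ne hble hne2) halt

lemma tri_contra {r1 r2 r3 b1 b2 b3 : ℝ} (h1 : 0 < r1) (h2 : 0 < r2) (h3 : 0 < r3)
    (e12 : |b1 - b2| = r1 + r2) (e13 : |b1 - b3| = r1 + r3)
    (e23 : |b2 - b3| = r2 + r3) : False := by
  rcases (abs_eq (by linarith : (0:ℝ) ≤ r1 + r2)).mp e12 with h | h <;>
  rcases (abs_eq (by linarith : (0:ℝ) ≤ r1 + r3)).mp e13 with h' | h' <;>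
  rcases (abs_eq (by linarith : (0:ℝ) ≤ r2 + r3)).mp e23 with h'' | h'' <;>
  linarith

/-- **Lemma 2.4.** If `{i,j,k}` is a clique of size 3 in the contact graph of a homothetic
square packing, then `S_i ∩ S_j ∩ S_k` contains exactly one point. -/
theorem triangle_inter_singleton (n : ℕ) (r : Fin n → ℝ) (p : Fin n → ℝ × ℝ)
    (hP : IsSqPacking r p) (i j k : Fin n)
    (hij : SqContact r p i j) (hik : SqContact r p i k) (hjk : SqContact r p j k) :
    ∃ z : ℝ × ℝ, homSq (r i) (p i) ∩ homSq (r j) (p j) ∩ homSq (r k) (p k) = {z} := by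

  obtain ⟨hrpos, hdisj⟩ := hP
  have cij := contact_le (hrpos i) (hrpos j) hij.2
  have cik := contact_le (hrpos i) (hrpos k) hik.2
  have cjk := contact_le (hrpos j) (hrpos k) hjk.2
  have Aij := abs_le.mp cij.1; have Bij := abs_le.mp cij.2
  have Aik := abs_le.mp cik.1; have Bik := abs_le.mp cik.2
  have Ajk := abs_le.mp cjk.1; have Bjk := abs_le.mp cjk.2
  set x : ℝ := max (max ((p i).1 - r i) ((p j).1 - r j)) ((p k).1 - r k) with hx
  set y : ℝ := max (max ((p i).2 - r i) ((p j).2 - r j)) ((p k).2 - r k) with hy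
  have hri := hrpos i; have hrj := hrpos j; have hrk := hrpos k
  have hxubi : x ≤ (p i).1 + r i :=
    max_le (max_le (by linarith) (by linarith)) (by linarith)
  have hxubj : x ≤ (p j).1 + r j :=
    max_le (max_le (by linarith) (by linarith)) (by linarith)
  have hxubk : x ≤ (p k).1 + r k :=
    max_le (max_le (by linarith) (by linarith)) (by linarith)
  have hyubi : y ≤ (p i).2 + r i :=
    max_le (max_le (by linarith) (by linarith)) (by linarith)
  have hyubj : y ≤ (p j).2 + r j :=
    max_le (max_le (by linarith) (by linarith)) (by linarith)
  have hyubk : y ≤ (p k).2 + r k :=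
    max_le (max_le (by linarith) (by linarith)) (by linarith)
  have hxi : |x - (p i).1| ≤ r i := by
    rw [abs_le]
    refine ⟨?_, by linarith⟩
    have : (p i).1 - r i ≤ x := le_max_of_le_left (le_max_left _ _)
    linarith
  have hxj : |x - (p j).1| ≤ r j := by
    rw [abs_le]
    refine ⟨?_, by linarith⟩
    have : (p j).1 - r j ≤ x := le_max_of_le_left (le_max_right _ _)
    linarith
  have hxk : |x - (p k).1| ≤ r k := by
    rw [abs_le]
    refine ⟨?_, by linarith⟩
    have : (p k).1 - r k ≤ x := le_max_right _ _
    linarith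
  have hyi : |y - (p i).2| ≤ r i := by
    rw [abs_le]
    refine ⟨?_, by linarith⟩
    have : (p i).2 - r i ≤ y := le_max_of_le_left (le_max_left _ _)
    linarith
  have hyj : |y - (p j).2| ≤ r j := by
    rw [abs_le]
    refine ⟨?_, by linarith⟩
    have : (p j).2 - r j ≤ y := le_max_of_le_left (le_max_right _ _)
    linarith
  have hyk : |y - (p k).2| ≤ r k := by
    rw [abs_le]
    refine ⟨?_, by linarith⟩
    have : (p k).2 - r k ≤ y := le_max_right _ _
    linarith
  have hzi : (x, y) ∈ homSq (r i) (p i) := (mem_homSq (hrpos i) _ _).mpr ⟨hxi, hyi⟩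
  have hzj : (x, y) ∈ homSq (r j) (p j) := (mem_homSq (hrpos j) _ _).mpr ⟨hxj, hyj⟩
  have hzk : (x, y) ∈ homSq (r k) (p k) := (mem_homSq (hrpos k) _ _).mpr ⟨hxk, hyk⟩
  refine ⟨(x, y), Set.eq_singleton_iff_unique_mem.mpr ⟨⟨⟨hzi, hzj⟩, hzk⟩, ?_⟩⟩
  rintro w ⟨⟨hwi, hwj⟩, hwk⟩
  have hx1 : w.1 = x := by
    by_contra hne
    exact tri_contra (hrpos i) (hrpos j) (hrpos k)
      (key_pair_x (hrpos i) (hrpos j) (hdisj i j hij.1) hwi hwj hzi hzj hne)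
      (key_pair_x (hrpos i) (hrpos k) (hdisj i k hik.1) hwi hwk hzi hzk hne)
      (key_pair_x (hrpos j) (hrpos k) (hdisj j k hjk.1) hwj hwk hzj hzk hne)
  have hy1 : w.2 = y := by
    by_contra hne
    exact tri_contra (hrpos i) (hrpos j) (hrpos k)
      (key_pair_y (hrpos i) (hrpos j) (hdisj i j hij.1) hwi hwj hzi hzj hne)
      (key_pair_y (hrpos i) (hrpos k) (hdisj i k hik.1) hwi hwk hzi hzk hne)
      (key_pair_y (hrpos j) (hrpos k) (hdisj j k hjk.1) hwj hwk hzj hzk hne)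
  exact Prod.ext hx1 hy1
end
end

section
/- Let P be a homothetic packing of n squares with contact graph G = ([n], E). Then every clique of G has size at most 4, and for every clique {i, j, k, ℓ} of size 4 the four squares S_i, S_j, S_k, S_ℓ share a corner. -/
open Finset Real

noncomputable section

namespace SqPack

def sg (b : Bool) : ℝ := if b then 1 else -1

lemma sg_cases (b : Bool) : sg b = 1 ∨ sg b = -1 := by cases b <;> simp [sg]

lemma sg_not (b : Bool) : sg (!b) = - sg b := by cases b <;> simp [sg]

lemma mem_homSq {R : ℝ} (hR : 0 < R) {c z : ℝ × ℝ} :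
    z ∈ homSq R c ↔ |z.1 - c.1| ≤ R ∧ |z.2 - c.2| ≤ R := by
  constructor
  · rintro ⟨q, ⟨h1, h2, h3, h4⟩, rfl⟩
    simp only [Prod.fst_add, Prod.snd_add, Prod.smul_fst, Prod.smul_snd, smul_eq_mul,
      add_sub_cancel_right]
    constructor <;> rw [abs_le] <;> constructor <;> nlinarith
  · rintro ⟨h1, h2⟩
    rw [abs_le] at h1 h2
    refine ⟨((z.1 - c.1)/R, (z.2 - c.2)/R), ⟨?_, ?_, ?_, ?_⟩, ?_⟩
    · rw [le_div_iff₀ hR]; linarith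
    · rw [div_le_one hR]; linarith
    · rw [le_div_iff₀ hR]; linarith
    · rw [div_le_one hR]; linarith
    · have : R ≠ 0 := ne_of_gt hR
      ext <;> simp [smul_eq_mul] <;> field_simp <;> ring

lemma homSq_eq_prod {R : ℝ} (hR : 0 < R) (c : ℝ × ℝ) :
    homSq R c = Set.Icc (c.1 - R) (c.1 + R) ×ˢ Set.Icc (c.2 - R) (c.2 + R) := by
  ext z
  rw [mem_homSq hR, Set.mem_prod, Set.mem_Icc, Set.mem_Icc, abs_le, abs_le]
  constructor
  · rintro ⟨⟨a, b⟩, ⟨d, e⟩⟩; exact ⟨⟨by linarith, by linarith⟩, by linarith, by linarith⟩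
  · rintro ⟨⟨a, b⟩, ⟨d, e⟩⟩; exact ⟨⟨by linarith, by linarith⟩, by linarith, by linarith⟩

lemma mem_interior_homSq {R : ℝ} (hR : 0 < R) {c z : ℝ × ℝ} :
    z ∈ interior (homSq R c) ↔ |z.1 - c.1| < R ∧ |z.2 - c.2| < R := by
  rw [homSq_eq_prod hR, interior_prod_eq, interior_Icc, interior_Icc,
    Set.mem_prod, Set.mem_Ioo, Set.mem_Ioo, abs_lt, abs_lt]
  constructor
  · rintro ⟨⟨a, b⟩, ⟨d, e⟩⟩; exact ⟨⟨by linarith, by linarith⟩, by linarith, by linarith⟩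
  · rintro ⟨⟨a, b⟩, ⟨d, e⟩⟩; exact ⟨⟨by linarith, by linarith⟩, by linarith, by linarith⟩

/-- Square with radius `R`, centre `c`, containing `z`, covers quadrant `s` at `z`. -/
def Cov (R : ℝ) (c z : ℝ × ℝ) (s : Bool × Bool) : Prop :=
  -R < sg s.1 * (c.1 - z.1) ∧ -R < sg s.2 * (c.2 - z.2)

/-- Canonical quadrant of a square with centre `c` at the point `z`. -/
def qd (z c : ℝ × ℝ) : Bool × Bool := (decide (z.1 ≤ c.1), decide (z.2 ≤ c.2))

lemma cov_qd {R : ℝ} (hR : 0 < R) (c z : ℝ × ℝ) : Cov R c z (qd z c) := by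
  constructor
  · by_cases h : z.1 ≤ c.1 <;> simp [qd, sg, h] <;> linarith
  · by_cases h : z.2 ≤ c.2 <;> simp [qd, sg, h] <;> linarith

lemma aux1 {R a d e : ℝ} (h1 : -R ≤ a) (h2 : a ≤ R) (he : e = 1 ∨ e = -1)
    (hd : 0 < d) (hde : d < R + e * (-a)) : |a + d * e| < R := by
  rcases he with rfl | rfl <;> rw [abs_lt] <;> constructor <;> nlinarith

/-- Two squares with disjoint interiors both containing `z` cannot cover the same
quadrant at `z`. -/
lemma covers_disjoint {Ri Rj : ℝ} {ci cj z : ℝ × ℝ} {s : Bool × Bool}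
    (hRi : 0 < Ri) (hRj : 0 < Rj)
    (hzi : z ∈ homSq Ri ci) (hzj : z ∈ homSq Rj cj)
    (hdisj : interior (homSq Ri ci) ∩ interior (homSq Rj cj) = ∅)
    (hi : Cov Ri ci z s) (hj : Cov Rj cj z s) : False := by
  obtain ⟨hi1, hi2⟩ := hi
  obtain ⟨hj1, hj2⟩ := hj
  rw [mem_homSq hRi, abs_le, abs_le] at hzi
  rw [mem_homSq hRj, abs_le, abs_le] at hzj
  set e1 := sg s.1 with he1
  set e2 := sg s.2 with he2
  set d := min (min (Ri + e1 * (ci.1 - z.1)) (Ri + e2 * (ci.2 - z.2)))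
      (min (Rj + e1 * (cj.1 - z.1)) (Rj + e2 * (cj.2 - z.2))) / 2 with hd
  have hm1 : min (min (Ri + e1 * (ci.1 - z.1)) (Ri + e2 * (ci.2 - z.2)))
      (min (Rj + e1 * (cj.1 - z.1)) (Rj + e2 * (cj.2 - z.2))) ≤ Ri + e1 * (ci.1 - z.1) :=
    (min_le_left _ _).trans (min_le_left _ _)
  have hm2 : min (min (Ri + e1 * (ci.1 - z.1)) (Ri + e2 * (ci.2 - z.2)))
      (min (Rj + e1 * (cj.1 - z.1)) (Rj + e2 * (cj.2 - z.2))) ≤ Ri + e2 * (ci.2 - z.2) :=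
    (min_le_left _ _).trans (min_le_right _ _)
  have hm3 : min (min (Ri + e1 * (ci.1 - z.1)) (Ri + e2 * (ci.2 - z.2)))
      (min (Rj + e1 * (cj.1 - z.1)) (Rj + e2 * (cj.2 - z.2))) ≤ Rj + e1 * (cj.1 - z.1) :=
    (min_le_right _ _).trans (min_le_left _ _)
  have hm4 : min (min (Ri + e1 * (ci.1 - z.1)) (Ri + e2 * (ci.2 - z.2)))
      (min (Rj + e1 * (cj.1 - z.1)) (Rj + e2 * (cj.2 - z.2))) ≤ Rj + e2 * (cj.2 - z.2) :=
    (min_le_right _ _).trans (min_le_right _ _)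
  have hmpos : 0 < min (min (Ri + e1 * (ci.1 - z.1)) (Ri + e2 * (ci.2 - z.2)))
      (min (Rj + e1 * (cj.1 - z.1)) (Rj + e2 * (cj.2 - z.2))) := by
    refine lt_min (lt_min ?_ ?_) (lt_min ?_ ?_) <;> linarith
  have hd0 : 0 < d := by positivity
  set w : ℝ × ℝ := (z.1 + d * e1, z.2 + d * e2) with hw
  have hwi : w ∈ interior (homSq Ri ci) := by
    rw [mem_interior_homSq hRi]
    constructor
    · rw [show w.1 - ci.1 = (z.1 - ci.1) + d * e1 by simp [hw]; ring]
      exact aux1 hzi.1.1 hzi.1.2 (sg_cases s.1) hd0 (by rw [neg_sub]; linarith)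
    · rw [show w.2 - ci.2 = (z.2 - ci.2) + d * e2 by simp [hw]; ring]
      exact aux1 hzi.2.1 hzi.2.2 (sg_cases s.2) hd0 (by rw [neg_sub]; linarith)
  have hwj : w ∈ interior (homSq Rj cj) := by
    rw [mem_interior_homSq hRj]
    constructor
    · rw [show w.1 - cj.1 = (z.1 - cj.1) + d * e1 by simp [hw]; ring]
      exact aux1 hzj.1.1 hzj.1.2 (sg_cases s.1) hd0 (by rw [neg_sub]; linarith)
    · rw [show w.2 - cj.2 = (z.2 - cj.2) + d * e2 by simp [hw]; ring]
      exact aux1 hzj.2.1 hzj.2.2 (sg_cases s.2) hd0 (by rw [neg_sub]; linarith)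
  have : w ∈ (∅ : Set (ℝ × ℝ)) := hdisj ▸ Set.mem_inter hwi hwj
  exact this

/-- 1-d Helly: pairwise intersecting intervals have a common point. -/
lemma common_1d {n : ℕ} {K : Finset (Fin n)} (hne : K.Nonempty) (c R : Fin n → ℝ)
    (hR : ∀ i, 0 < R i)
    (h : ∀ i ∈ K, ∀ j ∈ K, i ≠ j → ∃ w : ℝ, |w - c i| ≤ R i ∧ |w - c j| ≤ R j) :
    ∃ a : ℝ, ∀ i ∈ K, |a - c i| ≤ R i := by
  have hne' : (K.image fun i => c i - R i).Nonempty := hne.image _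
  set a := (K.image fun i => c i - R i).max' hne' with ha
  obtain ⟨i0, hi0, hi0a⟩ := Finset.mem_image.mp ((K.image fun i => c i - R i).max'_mem hne')
  refine ⟨a, fun i hi => ?_⟩
  rw [abs_le]
  have hub : c i - R i ≤ a :=
    Finset.le_max' _ _ (Finset.mem_image_of_mem (fun i => c i - R i) hi)
  have hlb : a ≤ c i + R i := by
    by_cases hii : i = i0
    · subst hii; rw [ha, ← hi0a]; linarith [hR i]
    · obtain ⟨w, hw1, hw2⟩ := h i0 hi0 i hi (fun e => hii e.symm)
      rw [abs_le] at hw1 hw2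
      rw [ha, ← hi0a]; linarith
  constructor <;> linarith

end SqPack

/-- The squares of a clique of the contact graph have a common point. -/
lemma clique_common {n : ℕ} {r : Fin n → ℝ} {p : Fin n → ℝ × ℝ} (hr : ∀ i, 0 < r i)
    {K : Finset (Fin n)} (hK : (contactGraph r p).IsClique (K : Set (Fin n)))
    (hne : K.Nonempty) : ∃ z : ℝ × ℝ, ∀ i ∈ K, z ∈ homSq (r i) (p i) := by
  have hpair : ∀ i ∈ K, ∀ j ∈ K, i ≠ j →
      ∃ w : ℝ × ℝ, w ∈ homSq (r i) (p i) ∧ w ∈ homSq (r j) (p j) := by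
    intro i hi j hj hij
    have hadj : SqContact r p i j := hK (Finset.mem_coe.mpr hi) (Finset.mem_coe.mpr hj) hij
    obtain ⟨w, hw1, hw2⟩ := hadj.2
    exact ⟨w, hw1, hw2⟩
  obtain ⟨a, haf⟩ := SqPack.common_1d hne (fun i => (p i).1) r hr (by
    intro i hi j hj hij
    obtain ⟨w, hw1, hw2⟩ := hpair i hi j hj hij
    exact ⟨w.1, ((SqPack.mem_homSq (hr i)).mp hw1).1, ((SqPack.mem_homSq (hr j)).mp hw2).1⟩)
  obtain ⟨b, hbf⟩ := SqPack.common_1d hne (fun i => (p i).2) r hr (by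
    intro i hi j hj hij
    obtain ⟨w, hw1, hw2⟩ := hpair i hi j hj hij
    exact ⟨w.2, ((SqPack.mem_homSq (hr i)).mp hw1).2, ((SqPack.mem_homSq (hr j)).mp hw2).2⟩)
  exact ⟨(a, b), fun i hi => (SqPack.mem_homSq (hr i)).mpr ⟨haf i hi, hbf i hi⟩⟩

/-- The canonical quadrant map is injective on a set of squares with pairwise disjoint
interiors all containing a common point `z`. -/
lemma qd_injOn {n : ℕ} {r : Fin n → ℝ} {p : Fin n → ℝ × ℝ} (hr : ∀ i, 0 < r i)
    (hdisj : ∀ i j, i ≠ j →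
      interior (homSq (r i) (p i)) ∩ interior (homSq (r j) (p j)) = ∅)
    {K : Finset (Fin n)} {z : ℝ × ℝ} (hz : ∀ i ∈ K, z ∈ homSq (r i) (p i)) :
    Set.InjOn (fun m => SqPack.qd z (p m)) (K : Set (Fin n)) := by
  intro i hi j hj hq
  by_contra hij
  have hcovj : SqPack.Cov (r j) (p j) z (SqPack.qd z (p i)) := by
    rw [show SqPack.qd z (p i) = SqPack.qd z (p j) from hq]
    exact SqPack.cov_qd (hr j) _ _
  exact SqPack.covers_disjoint (hr i) (hr j) (hz i (Finset.mem_coe.mp hi))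
    (hz j (Finset.mem_coe.mp hj)) (hdisj i j hij) (SqPack.cov_qd (hr i) _ _) hcovj

/-- **Lemma 2.5.** Every clique of the contact graph of a homothetic square packing has
size at most 4, and every clique of size 4 corresponds to four squares sharing a corner. -/
theorem clique_le_four_and_shareCorner (n : ℕ) (r : Fin n → ℝ) (p : Fin n → ℝ × ℝ)
    (hP : IsSqPacking r p) :
    (∀ K : Finset (Fin n), (contactGraph r p).IsClique (K : Set (Fin n)) → K.card ≤ 4) ∧
    (∀ i j k l : Fin n, ({i, j, k, l} : Finset (Fin n)).card = 4 →
      (contactGraph r p).IsClique ({i, j, k, l} : Set (Fin n)) →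
      ShareCorner r p i j k l) := by
  obtain ⟨hr, hdisj⟩ := hP
  constructor
  · -- every clique has size at most 4
    intro K hK
    rcases K.eq_empty_or_nonempty with rfl | hne
    · simp
    obtain ⟨z, hz⟩ := clique_common hr hK hne
    calc K.card ≤ (Finset.univ : Finset (Bool × Bool)).card :=
          Finset.card_le_card_of_injOn _ (fun a _ => Finset.mem_univ _) (qd_injOn hr hdisj hz)
      _ = 4 := by decide
  · -- every 4-clique shares a corner
    intro i j k l hcard hK
    have h3 : ∀ a b c : Fin n, ({a, b, c} : Finset (Fin n)).card ≤ 3 := by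
      intro a b c
      have h1 := Finset.card_insert_le a ({b, c} : Finset (Fin n))
      have h2 := Finset.card_insert_le b ({c} : Finset (Fin n))
      have h0 : ({c} : Finset (Fin n)).card = 1 := Finset.card_singleton c
      omega
    have hdup : ∀ S3 : Finset (Fin n), ({i, j, k, l} : Finset (Fin n)) ⊆ S3 →
        S3.card ≤ 3 → False := by
      intro S3 hsub h3'
      have := Finset.card_le_card hsub
      omega
    have hij : i ≠ j := by
      rintro rfl; exact hdup {i, k, l} (by intro x hx; simp at hx ⊢; tauto) (h3 _ _ _)
    have hik : i ≠ k := by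
      rintro rfl; exact hdup {i, j, l} (by intro x hx; simp at hx ⊢; tauto) (h3 _ _ _)
    have hil : i ≠ l := by
      rintro rfl; exact hdup {i, j, k} (by intro x hx; simp at hx ⊢; tauto) (h3 _ _ _)
    have hjk : j ≠ k := by
      rintro rfl; exact hdup {i, j, l} (by intro x hx; simp at hx ⊢; tauto) (h3 _ _ _)
    have hjl : j ≠ l := by
      rintro rfl; exact hdup {i, j, k} (by intro x hx; simp at hx ⊢; tauto) (h3 _ _ _)
    have hkl : k ≠ l := by
      rintro rfl; exact hdup {i, j, k} (by intro x hx; simp at hx ⊢; tauto) (h3 _ _ _)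
    have hKT : (contactGraph r p).IsClique ((({i, j, k, l} : Finset (Fin n)) : Set (Fin n))) := by
      simpa using hK
    obtain ⟨z, hz⟩ := clique_common hr hKT ⟨i, by simp⟩
    set f : Fin n → Bool × Bool := fun m => SqPack.qd z (p m) with hf
    have hcov : ∀ m, SqPack.Cov (r m) (p m) z (f m) := fun m => SqPack.cov_qd (hr m) _ _
    have hinj : Set.InjOn f ((({i, j, k, l} : Finset (Fin n)) : Set (Fin n))) :=
      qd_injOn hr hdisj hz
    have himg : Finset.image f {i, j, k, l} = (Finset.univ : Finset (Bool × Bool)) := by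
      apply Finset.eq_univ_of_card
      rw [Finset.card_image_of_injOn hinj, hcard]
      decide
    have hsurj : ∀ s : Bool × Bool, ∃ m ∈ ({i, j, k, l} : Finset (Fin n)), f m = s := by
      intro s
      have : s ∈ Finset.image f {i, j, k, l} := himg ▸ Finset.mem_univ s
      exact Finset.mem_image.mp this
    have hsgn : ∀ m ∈ ({i, j, k, l} : Finset (Fin n)),
        (p m).1 - z.1 = SqPack.sg (f m).1 * r m ∧
        (p m).2 - z.2 = SqPack.sg (f m).2 * r m := by
      intro m hm
      have hzm := hz m hm
      rw [SqPack.mem_homSq (hr m)] at hzm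
      obtain ⟨hx, hy⟩ := hzm
      rw [abs_le] at hx hy
      have key : ∀ s : Bool × Bool, s ≠ f m → SqPack.Cov (r m) (p m) z s → False := by
        intro s hs hcovs
        obtain ⟨m', hm', hfm'⟩ := hsurj s
        have hmm' : m ≠ m' := by
          rintro rfl
          exact hs hfm'.symm
        refine SqPack.covers_disjoint (hr m) (hr m') (hz m hm) (hz m' hm')
          (hdisj m m' hmm') hcovs ?_
        rw [← hfm']
        exact hcov m'
      have hcov1 := (hcov m).1
      have hcov2 := (hcov m).2
      constructor
      · by_contra hne'
        apply key ((!(f m).1), (f m).2)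
        · intro hEq
          have := congrArg Prod.fst hEq
          simp at this
        · refine ⟨?_, hcov2⟩
          simp only [SqPack.sg_not]
          rcases SqPack.sg_cases (f m).1 with he | he <;> rw [he] at hne' hcov1 ⊢
          · have hle : (p m).1 - z.1 ≤ r m := by linarith [hx.1]
            rcases eq_or_lt_of_le hle with hEq | hlt
            · exact absurd (by linarith) hne'
            · linarith
          · have hle : -(r m) ≤ (p m).1 - z.1 := by linarith [hx.2]
            rcases eq_or_lt_of_le hle with hEq | hlt
            · exact absurd (by linarith) hne'
            · linarith
      · by_contra hne'
        apply key ((f m).1, !(f m).2)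
        · intro hEq
          have := congrArg Prod.snd hEq
          simp at this
        · refine ⟨hcov1, ?_⟩
          simp only [SqPack.sg_not]
          rcases SqPack.sg_cases (f m).2 with he | he <;> rw [he] at hne' hcov2 ⊢
          · have hle : (p m).2 - z.2 ≤ r m := by linarith [hy.1]
            rcases eq_or_lt_of_le hle with hEq | hlt
            · exact absurd (by linarith) hne'
            · linarith
          · have hle : -(r m) ≤ (p m).2 - z.2 := by linarith [hy.2]
            rcases eq_or_lt_of_le hle with hEq | hlt
            · exact absurd (by linarith) hne'
            · linarith
    have hcor : ∀ m ∈ ({i, j, k, l} : Finset (Fin n)), IsSqCorner (r m) (p m) z := by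
      intro m hm
      obtain ⟨h1, h2⟩ := hsgn m hm
      constructor
      · rw [abs_eq (hr m).le]
        rcases SqPack.sg_cases (f m).1 with he | he <;> rw [he] at h1
        · right; linarith
        · left; linarith
      · rw [abs_eq (hr m).le]
        rcases SqPack.sg_cases (f m).2 with he | he <;> rw [he] at h2
        · right; linarith
        · left; linarith
    refine ⟨z, ?_, hcor i (by simp), hcor j (by simp), hcor k (by simp), hcor l (by simp)⟩
    ext w
    simp only [Set.mem_inter_iff, Set.mem_singleton_iff]
    constructor
    · rintro ⟨⟨⟨hwi, hwj⟩, hwk⟩, hwl⟩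
      have hwT : ∀ m ∈ ({i, j, k, l} : Finset (Fin n)), w ∈ homSq (r m) (p m) := by
        intro m hm
        simp only [Finset.mem_insert, Finset.mem_singleton] at hm
        rcases hm with rfl | rfl | rfl | rfl <;> assumption
      obtain ⟨mt, hmt, hfmt⟩ := hsurj (true, true)
      obtain ⟨mf, hmf, hfmf⟩ := hsurj (false, false)
      have ht := hsgn mt hmt
      have hfc := hsgn mf hmf
      rw [hfmt] at ht
      rw [hfmf] at hfc
      simp only [SqPack.sg] at ht hfc
      norm_num at ht hfc
      have hwt := (SqPack.mem_homSq (hr mt)).mp (hwT mt hmt)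
      have hwf := (SqPack.mem_homSq (hr mf)).mp (hwT mf hmf)
      obtain ⟨a1, a3⟩ := hwt
      obtain ⟨a2, a4⟩ := hwf
      rw [abs_le] at a1 a2 a3 a4
      have e1 : w.1 = z.1 := by
        have := ht.1; have := hfc.1; linarith [a1.1, a2.2]
      have e2 : w.2 = z.2 := by
        have := ht.2; have := hfc.2; linarith [a3.1, a4.2]
      exact Prod.ext_iff.mpr ⟨e1, e2⟩
    · rintro rfl
      exact ⟨⟨⟨hz i (by simp), hz j (by simp)⟩, hz k (by simp)⟩, hz l (by simp)⟩
end
end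

section
/- Every homothetic packing of n ≥ 3 squares has at most 4n − 8 contacts (i.e., its contact graph has at most 4n − 8 edges). -/
open Finset Real

noncomputable section

namespace SqLine

variable {ι : Type*} [DecidableEq ι]

/-- Edges between red intervals and blue intervals on one line. -/
def lineE (lo hi : ι → ℝ) (Red Blue : Finset ι) : Finset (ι × ι) :=
  (Red ×ˢ Blue).filter fun q => lo q.2 ≤ hi q.1 ∧ lo q.1 ≤ hi q.2

/-- Four-share values on one line. -/
def lineD (lo hi : ι → ℝ) (Red Blue : Finset ι) : Finset ℝ :=
  ((Red.image hi ∩ Red.image lo) ∩ Blue.image hi) ∩ Blue.image lo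

omit [DecidableEq ι] in
lemma mem_lineE {lo hi : ι → ℝ} {Red Blue : Finset ι} {q : ι × ι} :
    q ∈ lineE lo hi Red Blue ↔
      q.1 ∈ Red ∧ q.2 ∈ Blue ∧ lo q.2 ≤ hi q.1 ∧ lo q.1 ≤ hi q.2 := by
  unfold lineE
  rw [mem_filter, mem_product]
  tauto

theorem line_bound (lo hi : ι → ℝ) (Blue : Finset ι) (Red : Finset ι)
    (hndR : ∀ i ∈ Red, lo i < hi i) (hndB : ∀ i ∈ Blue, lo i < hi i)
    (hR : ∀ i ∈ Red, ∀ j ∈ Red, i ≠ j → hi i ≤ lo j ∨ hi j ≤ lo i)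
    (hB : ∀ i ∈ Blue, ∀ j ∈ Blue, i ≠ j → hi i ≤ lo j ∨ hi j ≤ lo i)
    (hne : (lineE lo hi Red Blue).Nonempty) :
    (lineE lo hi Red Blue).card + 1 ≤
      (Red.filter fun i => ∃ j ∈ Blue, (i, j) ∈ lineE lo hi Red Blue).card
      + (Blue.filter fun j => ∃ i ∈ Red, (i, j) ∈ lineE lo hi Red Blue).card
      + (lineD lo hi Red Blue).card := by
  induction Red using Finset.strongInduction with
  | _ Red IH =>
  set E := lineE lo hi Red Blue with hE
  obtain ⟨e₀, he₀⟩ := hne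
  have he₀' := mem_lineE.mp he₀
  set NR := Red.filter (fun i => ∃ j ∈ Blue, (i, j) ∈ E) with hNR
  have hNRne : NR.Nonempty :=
    ⟨e₀.1, mem_filter.mpr ⟨he₀'.1, e₀.2, he₀'.2.1, by simpa using he₀⟩⟩
  obtain ⟨R, hRNR, hRmax⟩ := NR.exists_max_image hi hNRne
  have hRRed : R ∈ Red := (mem_filter.mp hRNR).1
  set NB := Blue.filter (fun j => (R, j) ∈ E) with hNB
  have hNBne : NB.Nonempty := by
    obtain ⟨j, hjB, hj⟩ := (mem_filter.mp hRNR).2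
    exact ⟨j, mem_filter.mpr ⟨hjB, hj⟩⟩
  obtain ⟨Bu, hBuNB, hBumin⟩ := NB.exists_min_image lo hNBne
  have hBuB : Bu ∈ Blue := (mem_filter.mp hBuNB).1
  have hRBu : (R, Bu) ∈ E := (mem_filter.mp hBuNB).2
  set Red' := Red.erase R with hRed'
  set E' := lineE lo hi Red' Blue with hE'
  have hE'sub : E' = E.filter (fun q => q.1 ≠ R) := by
    ext q
    rw [hE', mem_lineE, mem_filter, hE, mem_lineE, hRed', mem_erase]
    tauto
  have hRedge : (E.filter (fun q => q.1 = R)).card = NB.card := by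
    have himg : E.filter (fun q => q.1 = R) = NB.image (fun b => (R, b)) := by
      ext q
      rw [mem_filter, Finset.mem_image]
      constructor
      · rintro ⟨hqE, hq1⟩
        refine ⟨q.2, ?_, ?_⟩
        · rw [hNB, mem_filter]
          have hq1' := mem_lineE.mp hqE
          refine ⟨hq1'.2.1, ?_⟩
          have : (R, q.2) = q := by rw [← hq1]
          rw [this]
          exact hqE
        · rw [← hq1]
      · rintro ⟨b, hb, rfl⟩
        rw [hNB, mem_filter] at hb
        exact ⟨hb.2, rfl⟩
    rw [himg, Finset.card_image_of_injective]
    intro a b hab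
    exact (Prod.ext_iff.mp hab).2
  have hsplit : E.card = E'.card + NB.card := by
    rw [hE'sub, ← hRedge, add_comm]
    exact (Finset.card_filter_add_card_filter_not (p := fun q : ι × ι => q.1 = R)).symm
  -- maximality: other non-isolated reds lie below lo R
  have hRtop : ∀ R'' ∈ NR, R'' ≠ R → hi R'' ≤ lo R := by
    intro R'' hR'' hne'
    have hR''Red : R'' ∈ Red := (mem_filter.mp hR'').1
    rcases hR R'' hR''Red R hRRed hne' with h | h
    · exact h
    · exact absurd (hndR R'' hR''Red) (not_lt.mpr ((hRmax R'' hR'').trans h))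
  -- survivors
  set Surv := NB.filter (fun B => B ≠ Bu ∧ ∃ i ∈ Red', (i, B) ∈ E') with hSurv
  -- core fact about survivors
  have hcore : ∀ B ∈ Surv, lo B = lo R ∧ hi Bu = lo R ∧ (∃ i ∈ Red', hi i = lo R) := by
    intro B hBs
    rw [hSurv, mem_filter] at hBs
    obtain ⟨hBNB, hBne, R'', hR''m, hR''e⟩ := hBs
    have hBBlue : B ∈ Blue := (mem_filter.mp hBNB).1
    have hR''Red : R'' ∈ Red := Finset.mem_of_mem_erase hR''m
    have hR''ne : R'' ≠ R := Finset.ne_of_mem_erase hR''m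
    have hR''E : (R'', B) ∈ E := by
      rw [hE'sub, mem_filter] at hR''e
      exact hR''e.1
    have hR''NR : R'' ∈ NR := mem_filter.mpr ⟨hR''Red, B, hBBlue, hR''E⟩
    have h1 : lo B ≤ hi R'' := (mem_lineE.mp hR''E).2.2.1
    have h2 : hi R'' ≤ lo R := hRtop R'' hR''NR hR''ne
    have h3 : lo R ≤ hi Bu := (mem_lineE.mp hRBu).2.2.2
    have h4 : hi Bu ≤ lo B := by
      rcases hB B hBBlue Bu hBuB hBne with h | h
      · exact absurd (hndB B hBBlue)
          (not_lt.mpr (h.trans (hBumin B hBNB)))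
      · exact h
    have heq : lo B = lo R := le_antisymm (h1.trans h2) (h3.trans h4)
    refine ⟨heq, le_antisymm (h4.trans (heq.le)) h3, R'', hR''m, le_antisymm h2 (by linarith)⟩
  have hSurvcard : Surv.card ≤ 1 := by
    rw [Finset.card_le_one]
    intro a ha b hb
    have hA := (hcore a ha).1
    have hB' := (hcore b hb).1
    by_contra hab
    have haB : a ∈ Blue := (mem_filter.mp (mem_filter.mp ha).1).1
    have hbB : b ∈ Blue := (mem_filter.mp (mem_filter.mp hb).1).1
    rcases hB a haB b hbB hab with h | h
    · exact absurd (hndB a haB) (not_lt.mpr (by rw [hB'] at h; rw [hA]; exact h))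
    · exact absurd (hndB b hbB) (not_lt.mpr (by rw [hA] at h; rw [hB']; exact h))
  -- the D bookkeeping
  have hDsub : lineD lo hi Red' Blue ⊆ lineD lo hi Red Blue := by
    unfold lineD
    apply Finset.inter_subset_inter _ (Finset.Subset.refl _)
    apply Finset.inter_subset_inter _ (Finset.Subset.refl _)
    exact Finset.inter_subset_inter (Finset.image_subset_image (Finset.erase_subset _ _))
      (Finset.image_subset_image (Finset.erase_subset _ _))
  have hDdrop : Surv.Nonempty →
      lo R ∈ lineD lo hi Red Blue ∧ lo R ∉ lineD lo hi Red' Blue := by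
    rintro ⟨B, hBs⟩
    obtain ⟨h1, h2, R'', hR''m, hR''hi⟩ := hcore B hBs
    have hBBlue : B ∈ Blue := (mem_filter.mp (mem_filter.mp hBs).1).1
    constructor
    · unfold lineD
      rw [mem_inter, mem_inter, mem_inter]
      exact ⟨⟨⟨mem_image.mpr ⟨R'', Finset.mem_of_mem_erase hR''m, hR''hi⟩,
        mem_image.mpr ⟨R, hRRed, rfl⟩⟩,
        mem_image.mpr ⟨Bu, hBuB, h2⟩⟩, mem_image.mpr ⟨B, hBBlue, h1⟩⟩
    · unfold lineD
      rw [mem_inter, mem_inter, mem_inter]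
      rintro ⟨⟨⟨-, hmem⟩, -⟩, -⟩
      obtain ⟨R₂, hR₂m, hR₂⟩ := mem_image.mp hmem
      have hR₂Red : R₂ ∈ Red := Finset.mem_of_mem_erase hR₂m
      have hR₂ne : R₂ ≠ R := Finset.ne_of_mem_erase hR₂m
      rcases hR R₂ hR₂Red R hRRed hR₂ne with h | h
      · exact absurd (hndR R₂ hR₂Red) (not_lt.mpr (by linarith))
      · exact absurd (hndR R hRRed) (not_lt.mpr (by linarith))
  -- vertex counts
  set vB := Blue.filter (fun j => ∃ i ∈ Red, (i, j) ∈ E) with hvBdef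
  set vR' := Red'.filter (fun i => ∃ j ∈ Blue, (i, j) ∈ E') with hvR'def
  set vB' := Blue.filter (fun j => ∃ i ∈ Red', (i, j) ∈ E') with hvB'def
  have hvRsucc : NR = insert R vR' := by
    ext i
    rw [hNR, hvR'def, mem_insert, mem_filter, mem_filter]
    constructor
    · rintro ⟨hiRed, j, hjB, hij⟩
      by_cases hiR : i = R
      · exact Or.inl hiR
      · refine Or.inr ⟨Finset.mem_erase.mpr ⟨hiR, hiRed⟩, j, hjB, ?_⟩
        rw [hE'sub, mem_filter]
        exact ⟨hij, hiR⟩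
    · rintro (rfl | ⟨hi', j, hjB, hij⟩)
      · exact ⟨hRRed, Bu, hBuB, hRBu⟩
      · refine ⟨Finset.mem_of_mem_erase hi', j, hjB, ?_⟩
        rw [hE'sub, mem_filter] at hij
        exact hij.1
  have hRnotin : R ∉ vR' := by
    rw [hvR'def, mem_filter]
    rintro ⟨hmem, -⟩
    exact (Finset.notMem_erase R Red) hmem
  have hvRcard : NR.card = vR'.card + 1 := by
    rw [hvRsucc, Finset.card_insert_of_notMem hRnotin]
  have hvBsup : vB' ∪ ((NB.erase Bu) \ Surv) ⊆ vB := by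
    intro b hb
    rcases Finset.mem_union.mp hb with hb | hb
    · rw [hvB'def, mem_filter] at hb
      obtain ⟨hbB, i, hi', hib⟩ := hb
      rw [hE'sub, mem_filter] at hib
      exact mem_filter.mpr ⟨hbB, i, Finset.mem_of_mem_erase hi', hib.1⟩
    · have hbNB : b ∈ NB := Finset.mem_of_mem_erase (Finset.mem_sdiff.mp hb).1
      rw [hNB, mem_filter] at hbNB
      exact mem_filter.mpr ⟨hbNB.1, R, hRRed, hbNB.2⟩
  have hvBdisj : Disjoint vB' ((NB.erase Bu) \ Surv) := by
    rw [Finset.disjoint_right]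
    intro b hb
    rw [Finset.mem_sdiff] at hb
    obtain ⟨hbe, hbs⟩ := hb
    rw [hvB'def, mem_filter]
    rintro ⟨hbB, i, hi', hib⟩
    apply hbs
    rw [hSurv, mem_filter]
    have hbNB : b ∈ NB := Finset.mem_of_mem_erase hbe
    exact ⟨hbNB, Finset.ne_of_mem_erase hbe, i, hi', hib⟩
  have hvBge : vB'.card + ((NB.erase Bu) \ Surv).card ≤ vB.card := by
    rw [← Finset.card_union_of_disjoint hvBdisj]
    exact Finset.card_le_card hvBsup
  have hNBpos : 1 ≤ NB.card := Finset.card_pos.mpr hNBne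
  have herasecard : (NB.erase Bu).card + 1 = NB.card := by
    rw [Finset.card_erase_of_mem hBuNB]
    omega
  have hsd : (NB.erase Bu).card ≤ ((NB.erase Bu) \ Surv).card + Surv.card :=
    Finset.card_le_card_sdiff_add_card
  have hNBvB : NB ⊆ vB := by
    intro b hb
    rw [hNB, mem_filter] at hb
    exact mem_filter.mpr ⟨hb.1, R, hRRed, hb.2⟩
  have hNRvRpos : 1 ≤ NR.card := Finset.card_pos.mpr ⟨R, hRNR⟩
  by_cases hE'ne : E'.Nonempty
  · -- inductive case
    have hIH := IH Red' (Finset.erase_ssubset hRRed)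
      (fun i hi => hndR i (Finset.mem_of_mem_erase hi))
      (fun i hi j hj hij => hR i (Finset.mem_of_mem_erase hi) j (Finset.mem_of_mem_erase hj) hij)
      hE'ne
    rw [← hE', ← hvR'def, ← hvB'def] at hIH
    by_cases hSne : Surv.Nonempty
    · -- degenerate corner case: D strictly decreases
      obtain ⟨hDin, hDout⟩ := hDdrop hSne
      have hDlt : (lineD lo hi Red' Blue).card < (lineD lo hi Red Blue).card :=
        Finset.card_lt_card (Finset.ssubset_iff_of_subset hDsub |>.mpr ⟨lo R, hDin, hDout⟩)
      omega
    · have hS0 : Surv.card = 0 := by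
        rw [Finset.card_eq_zero]
        exact Finset.not_nonempty_iff_eq_empty.mp hSne
      have hDle : (lineD lo hi Red' Blue).card ≤ (lineD lo hi Red Blue).card :=
        Finset.card_le_card hDsub
      omega
  · -- base case: all edges touch R
    have hE'0 : E'.card = 0 := by
      rw [Finset.card_eq_zero]
      exact Finset.not_nonempty_iff_eq_empty.mp hE'ne
    have hNBle : NB.card ≤ vB.card := Finset.card_le_card hNBvB
    omega

end SqLine

open Finset

noncomputable section

namespace SqDir

open SqLine

variable {ι : Type*} [Fintype ι] [DecidableEq ι]

/-- Directed contact pairs in one axis direction. -/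
def dirE (a b lo hi : ι → ℝ) : Finset (ι × ι) :=
  Finset.univ.filter fun q => b q.1 = a q.2 ∧ lo q.2 ≤ hi q.1 ∧ lo q.1 ≤ hi q.2

/-- Four-share corner points. -/
def dirM (a b lo hi : ι → ℝ) : Finset (ℝ × ℝ) :=
  (Finset.univ.image fun i => (b i, hi i)).filter fun z =>
    (∃ i, b i = z.1 ∧ hi i = z.2) ∧ (∃ i, b i = z.1 ∧ lo i = z.2) ∧
    (∃ i, a i = z.1 ∧ hi i = z.2) ∧ (∃ i, a i = z.1 ∧ lo i = z.2)

lemma mem_dirE {a b lo hi : ι → ℝ} {q : ι × ι} :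
    q ∈ dirE a b lo hi ↔ b q.1 = a q.2 ∧ lo q.2 ≤ hi q.1 ∧ lo q.1 ≤ hi q.2 := by
  unfold dirE
  rw [mem_filter]
  simp

lemma mem_dirM {a b lo hi : ι → ℝ} {z : ℝ × ℝ} :
    z ∈ dirM a b lo hi ↔
      (∃ i, b i = z.1 ∧ hi i = z.2) ∧ (∃ i, b i = z.1 ∧ lo i = z.2) ∧
      (∃ i, a i = z.1 ∧ hi i = z.2) ∧ (∃ i, a i = z.1 ∧ lo i = z.2) := by
  unfold dirM
  rw [mem_filter]
  constructor
  · tauto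
  · intro h
    refine ⟨?_, h⟩
    obtain ⟨i, hi1, hi2⟩ := h.1
    rw [Finset.mem_image]
    exact ⟨i, mem_univ i, by rw [hi1, hi2]⟩

theorem dir_master (a b lo hi : ι → ℝ)
    (hab : ∀ i, a i < b i) (hlh : ∀ i, lo i < hi i)
    (hsb : ∀ i j, i ≠ j → b i = b j → hi i ≤ lo j ∨ hi j ≤ lo i)
    (hsa : ∀ i j, i ≠ j → a i = a j → hi i ≤ lo j ∨ hi j ≤ lo i) :
    (dirE a b lo hi).card
      + (Finset.univ.filter fun i : ι => ¬∃ j, (j, i) ∈ dirE a b lo hi).card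
      + (Finset.univ.filter fun i : ι => ¬∃ j, (i, j) ∈ dirE a b lo hi).card
      + ((dirE a b lo hi).image fun q => b q.1).card
      ≤ 2 * Fintype.card ι + (dirM a b lo hi).card := by
  classical
  set E := dirE a b lo hi with hEdef
  set A := E.image (fun q => b q.1) with hAdef
  set Red : ℝ → Finset ι := fun t => Finset.univ.filter (fun i => b i = t) with hReddef
  set Blue : ℝ → Finset ι := fun t => Finset.univ.filter (fun i => a i = t) with hBluedef
  -- fiberwise identification of edge sets
  have hfiber : ∀ t, E.filter (fun q => b q.1 = t) = lineE lo hi (Red t) (Blue t) := by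
    intro t
    ext q
    rw [mem_filter, hEdef, mem_dirE, mem_lineE, hReddef, hBluedef]
    simp only [mem_filter, mem_univ, true_and]
    constructor
    · rintro ⟨⟨h1, h2, h3⟩, h4⟩
      exact ⟨h4, by rw [← h1, h4], h2, h3⟩
    · rintro ⟨h1, h2, h3, h4⟩
      exact ⟨⟨by rw [h1, h2], h3, h4⟩, h1⟩
  have hEcard : E.card = ∑ t ∈ A, (lineE lo hi (Red t) (Blue t)).card := by
    rw [Finset.card_eq_sum_card_fiberwise (f := fun q : ι × ι => b q.1) (t := A)]
    · exact Finset.sum_congr rfl fun t _ => by rw [hfiber t]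
    · intro q hq
      rw [hAdef]
      exact Finset.mem_image_of_mem _ hq
  -- per-line nonemptiness and the line bound
  have hline : ∀ t ∈ A, (lineE lo hi (Red t) (Blue t)).card + 1 ≤
      ((Red t).filter fun i => ∃ j ∈ Blue t, (i, j) ∈ lineE lo hi (Red t) (Blue t)).card
      + ((Blue t).filter fun j => ∃ i ∈ Red t, (i, j) ∈ lineE lo hi (Red t) (Blue t)).card
      + (lineD lo hi (Red t) (Blue t)).card := by
    intro t ht
    rw [hAdef] at ht
    obtain ⟨q, hqE, hqt⟩ := Finset.mem_image.mp ht
    have hqmem : q ∈ lineE lo hi (Red t) (Blue t) := by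
      rw [← hfiber t, mem_filter]
      exact ⟨hqE, hqt⟩
    apply line_bound
    · intro i _
      exact hlh i
    · intro i _
      exact hlh i
    · intro i hi j hj hij
      rw [hReddef] at hi hj
      simp only [mem_filter, mem_univ, true_and] at hi hj
      exact hsb i j hij (by rw [hi, hj])
    · intro i hi j hj hij
      rw [hBluedef] at hi hj
      simp only [mem_filter, mem_univ, true_and] at hi hj
      exact hsa i j hij (by rw [hi, hj])
    · exact ⟨q, hqmem⟩
  -- sum of red vertex counts
  have hvRsum : (Finset.univ.filter fun i : ι => ∃ j, (i, j) ∈ E).card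
      = ∑ t ∈ A, ((Red t).filter fun i =>
        ∃ j ∈ Blue t, (i, j) ∈ lineE lo hi (Red t) (Blue t)).card := by
    rw [Finset.card_eq_sum_card_fiberwise (f := fun i : ι => b i) (t := A)]
    · apply Finset.sum_congr rfl
      intro t _
      congr 1
      ext i
      simp only [mem_filter, mem_univ, true_and, hReddef, hBluedef, mem_lineE]
      constructor
      · rintro ⟨⟨j, hj⟩, hbt⟩
        have hj' := mem_dirE.mp hj
        have hat : a j = t := by rw [← hj'.1, hbt]
        exact ⟨hbt, j, hat, hbt, hat, hj'.2.1, hj'.2.2⟩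
      · rintro ⟨hbt, j, hat, -, -, h1, h2⟩
        exact ⟨⟨j, mem_dirE.mpr ⟨by rw [hbt, hat], h1, h2⟩⟩, hbt⟩
    · intro i hi
      rw [Finset.mem_coe, mem_filter] at hi
      obtain ⟨-, j, hj⟩ := hi
      rw [hAdef]
      exact Finset.mem_image.mpr ⟨(i, j), hj, rfl⟩
  -- sum of blue vertex counts
  have hvBsum : (Finset.univ.filter fun i : ι => ∃ j, (j, i) ∈ E).card
      = ∑ t ∈ A, ((Blue t).filter fun j =>
        ∃ i ∈ Red t, (i, j) ∈ lineE lo hi (Red t) (Blue t)).card := by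
    rw [Finset.card_eq_sum_card_fiberwise (f := fun i : ι => a i) (t := A)]
    · apply Finset.sum_congr rfl
      intro t _
      congr 1
      ext i
      simp only [mem_filter, mem_univ, true_and, hReddef, hBluedef, mem_lineE]
      constructor
      · rintro ⟨⟨j, hj⟩, hat⟩
        have hj' := mem_dirE.mp hj
        have hbt : b j = t := by rw [hj'.1, hat]
        exact ⟨hat, j, hbt, hbt, hat, hj'.2.1, hj'.2.2⟩
      · rintro ⟨hat, j, hbt, -, -, h1, h2⟩
        exact ⟨⟨j, mem_dirE.mpr ⟨by rw [hbt, hat], h1, h2⟩⟩, hat⟩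
    · intro i hi
      rw [Finset.mem_coe, mem_filter] at hi
      obtain ⟨-, j, hj⟩ := hi
      rw [hAdef]
      have := mem_dirE.mp hj
      exact Finset.mem_image.mpr ⟨(j, i), hj, this.1.symm ▸ rfl⟩
  -- sum of four-share counts
  have hMsum : (dirM a b lo hi).card = ∑ t ∈ A, (lineD lo hi (Red t) (Blue t)).card := by
    rw [Finset.card_eq_sum_card_fiberwise (f := fun z : ℝ × ℝ => z.1) (t := A)]
    · apply Finset.sum_congr rfl
      intro t _
      apply Finset.card_bij (fun (z : ℝ × ℝ) _ => z.2)
      · intro z hz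
        rw [mem_filter] at hz
        obtain ⟨hzM, hzt⟩ := hz
        rw [mem_dirM] at hzM
        obtain ⟨⟨i1, h1⟩, ⟨i2, h2⟩, ⟨i3, h3⟩, ⟨i4, h4⟩⟩ := hzM
        unfold SqLine.lineD
        rw [mem_inter, mem_inter, mem_inter]
        refine ⟨⟨⟨?_, ?_⟩, ?_⟩, ?_⟩ <;> rw [Finset.mem_image]
        · exact ⟨i1, by rw [hReddef]; simp only [mem_filter, mem_univ, true_and]; rw [h1.1, hzt], h1.2⟩
        · exact ⟨i2, by rw [hReddef]; simp only [mem_filter, mem_univ, true_and]; rw [h2.1, hzt], h2.2⟩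
        · exact ⟨i3, by rw [hBluedef]; simp only [mem_filter, mem_univ, true_and]; rw [h3.1, hzt], h3.2⟩
        · exact ⟨i4, by rw [hBluedef]; simp only [mem_filter, mem_univ, true_and]; rw [h4.1, hzt], h4.2⟩
      · intro z hz z' hz' hzz
        rw [mem_filter] at hz hz'
        rw [Prod.ext_iff]
        exact ⟨hz.2.trans hz'.2.symm, hzz⟩
      · intro p hp
        unfold SqLine.lineD at hp
        rw [mem_inter, mem_inter, mem_inter] at hp
        obtain ⟨⟨⟨hp1, hp2⟩, hp3⟩, hp4⟩ := hp
        obtain ⟨i1, hi1m, hi1⟩ := Finset.mem_image.mp hp1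
        obtain ⟨i2, hi2m, hi2⟩ := Finset.mem_image.mp hp2
        obtain ⟨i3, hi3m, hi3⟩ := Finset.mem_image.mp hp3
        obtain ⟨i4, hi4m, hi4⟩ := Finset.mem_image.mp hp4
        rw [hReddef] at hi1m hi2m
        rw [hBluedef] at hi3m hi4m
        simp only [mem_filter, mem_univ, true_and] at hi1m hi2m hi3m hi4m
        refine ⟨(t, p), ?_, rfl⟩
        rw [mem_filter, mem_dirM]
        exact ⟨⟨⟨i1, hi1m, hi1⟩, ⟨i2, hi2m, hi2⟩, ⟨i3, hi3m, hi3⟩, ⟨i4, hi4m, hi4⟩⟩, rfl⟩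
    · -- every corner point lies on an active line
      intro z hz
      rw [Finset.mem_coe, mem_dirM] at hz
      obtain ⟨⟨i1, h1⟩, -, -, ⟨i4, h4⟩⟩ := hz
      rw [hAdef]
      refine Finset.mem_image.mpr ⟨(i1, i4), ?_, by simpa using h1.1⟩
      rw [mem_dirE]
      refine ⟨by rw [h1.1, h4.1], by rw [h4.2, h1.2], ?_⟩
      have g1 := hlh i1
      have g4 := hlh i4
      rw [h1.2, ← h4.2] at g1
      linarith
  -- complements
  have hcompl1 : (Finset.univ.filter fun i : ι => ∃ j, (i, j) ∈ E).card
      + (Finset.univ.filter fun i : ι => ¬∃ j, (i, j) ∈ E).card = Fintype.card ι := by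
    rw [Finset.card_filter_add_card_filter_not]
    rfl
  have hcompl2 : (Finset.univ.filter fun i : ι => ∃ j, (j, i) ∈ E).card
      + (Finset.univ.filter fun i : ι => ¬∃ j, (j, i) ∈ E).card = Fintype.card ι := by
    rw [Finset.card_filter_add_card_filter_not]
    rfl
  -- put it together
  have hsum : E.card + A.card ≤
      (Finset.univ.filter fun i : ι => ∃ j, (i, j) ∈ E).card
      + (Finset.univ.filter fun i : ι => ∃ j, (j, i) ∈ E).card + (dirM a b lo hi).card := by
    rw [hEcard, hvRsum, hvBsum, hMsum, ← Finset.sum_add_distrib, ← Finset.sum_add_distrib]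
    calc (∑ t ∈ A, (lineE lo hi (Red t) (Blue t)).card) + A.card
        = ∑ t ∈ A, ((lineE lo hi (Red t) (Blue t)).card + 1) := by
          rw [Finset.sum_add_distrib, Finset.sum_const, smul_eq_mul, mul_one]
      _ ≤ _ := Finset.sum_le_sum hline
  omega

theorem dir_roots (a b lo hi : ι → ℝ) (hab : ∀ i, a i < b i)
    (hn : 3 ≤ Fintype.card ι) :
    4 ≤ (Finset.univ.filter fun i : ι => ¬∃ j, (j, i) ∈ dirE a b lo hi).card
      + (Finset.univ.filter fun i : ι => ¬∃ j, (i, j) ∈ dirE a b lo hi).card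
      + ((dirE a b lo hi).image fun q => b q.1).card := by
  classical
  have hne : (Finset.univ : Finset ι).Nonempty := by
    rw [← Finset.card_pos]
    rw [Finset.card_univ]
    omega
  obtain ⟨i₀, -, hi₀⟩ := Finset.exists_min_image Finset.univ a hne
  obtain ⟨i₁, -, hi₁⟩ := Finset.exists_max_image Finset.univ b hne
  have hLmem : i₀ ∈ Finset.univ.filter fun i : ι => ¬∃ j, (j, i) ∈ dirE a b lo hi := by
    rw [mem_filter]
    refine ⟨mem_univ _, ?_⟩
    rintro ⟨j, hj⟩
    have hj' := mem_dirE.mp hj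
    have := hab j
    have := hi₀ j (mem_univ j)
    simp only at hj'
    linarith [hj'.1]
  have hRmem : i₁ ∈ Finset.univ.filter fun i : ι => ¬∃ j, (i, j) ∈ dirE a b lo hi := by
    rw [mem_filter]
    refine ⟨mem_univ _, ?_⟩
    rintro ⟨j, hj⟩
    have hj' := mem_dirE.mp hj
    have := hab j
    have := hi₁ j (mem_univ j)
    simp only at hj'
    linarith [hj'.1]
  have hL1 : 1 ≤ (Finset.univ.filter fun i : ι => ¬∃ j, (j, i) ∈ dirE a b lo hi).card :=
    Finset.card_pos.mpr ⟨i₀, hLmem⟩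
  have hR1 : 1 ≤ (Finset.univ.filter fun i : ι => ¬∃ j, (i, j) ∈ dirE a b lo hi).card :=
    Finset.card_pos.mpr ⟨i₁, hRmem⟩
  set A := (dirE a b lo hi).image fun q => b q.1 with hAdef
  by_cases h2 : 2 ≤ A.card
  · omega
  · interval_cases h : A.card
    · -- no edges at all
      have hAe : A = ∅ := Finset.card_eq_zero.mp h
      have hEe : dirE a b lo hi = ∅ := by
        rw [← Finset.not_nonempty_iff_eq_empty]
        rintro ⟨q, hq⟩
        have : b q.1 ∈ A := Finset.mem_image_of_mem _ hq
        rw [hAe] at this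
        exact absurd this (Finset.notMem_empty _)
      have : (Finset.univ.filter fun i : ι => ¬∃ j, (j, i) ∈ dirE a b lo hi) = Finset.univ := by
        ext i
        simp only [mem_filter, mem_univ, true_and, iff_true]
        rintro ⟨j, hj⟩
        rw [hEe] at hj
        exact absurd hj (Finset.notMem_empty _)
      rw [this, Finset.card_univ]
      omega
    · -- exactly one active line
      obtain ⟨t, ht⟩ := Finset.card_eq_one.mp h
      have hcover : (Finset.univ : Finset ι) ⊆
          (Finset.univ.filter fun i : ι => ¬∃ j, (j, i) ∈ dirE a b lo hi)
          ∪ (Finset.univ.filter fun i : ι => ¬∃ j, (i, j) ∈ dirE a b lo hi) := by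
        intro i _
        rw [Finset.mem_union, mem_filter, mem_filter]
        by_contra hc
        push_neg at hc
        obtain ⟨j, hj⟩ := hc.1 (mem_univ i)
        obtain ⟨k, hk⟩ := hc.2 (mem_univ i)
        have h1 : b j ∈ A := Finset.mem_image_of_mem _ hj
        have h2 : b i ∈ A := Finset.mem_image_of_mem _ hk
        rw [ht, Finset.mem_singleton] at h1 h2
        have hj' := (mem_dirE.mp hj).1
        simp only at hj'
        have := hab i
        rw [h2] at this
        rw [← hj', h1] at this
        exact lt_irrefl t this
      have := Finset.card_le_card hcover
      rw [Finset.card_univ] at this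
      have := Finset.card_union_le
        (Finset.univ.filter fun i : ι => ¬∃ j, (j, i) ∈ dirE a b lo hi)
        (Finset.univ.filter fun i : ι => ¬∃ j, (i, j) ∈ dirE a b lo hi)
      omega

end SqDir

section GeoAux
open Set

lemma homSq_eq (r : ℝ) (hr : 0 < r) (p : ℝ × ℝ) :
    homSq r p = (Icc (p.1 - r) (p.1 + r)) ×ˢ (Icc (p.2 - r) (p.2 + r)) := by
  ext z
  constructor
  · rintro ⟨q, ⟨h1, h2, h3, h4⟩, rfl⟩
    simp only [Prod.smul_def, smul_eq_mul, Prod.mk_add_mk, Set.mem_prod, Set.mem_Icc,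
      Prod.fst_add, Prod.snd_add, Prod.smul_fst, Prod.smul_snd]
    constructor
    · constructor <;> nlinarith
    · constructor <;> nlinarith
  · rintro ⟨⟨h1, h2⟩, h3, h4⟩
    refine ⟨⟨(z.1 - p.1) / r, (z.2 - p.2) / r⟩, ⟨?_, ?_, ?_, ?_⟩, ?_⟩
    · rw [le_div_iff₀ hr]; linarith
    · rw [div_le_iff₀ hr]; linarith
    · rw [le_div_iff₀ hr]; linarith
    · rw [div_le_iff₀ hr]; linarith
    · ext <;> simp <;> field_simp <;> ring

lemma interior_homSq (r : ℝ) (hr : 0 < r) (p : ℝ × ℝ) :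
    interior (homSq r p) = (Ioo (p.1 - r) (p.1 + r)) ×ˢ (Ioo (p.2 - r) (p.2 + r)) := by
  rw [homSq_eq r hr p, interior_prod_eq, interior_Icc, interior_Icc]

namespace SqPack

variable {n : ℕ} (r : Fin n → ℝ) (p : Fin n → ℝ × ℝ)

def xl (i : Fin n) : ℝ := (p i).1 - r i
def xr (i : Fin n) : ℝ := (p i).1 + r i
def yl (i : Fin n) : ℝ := (p i).2 - r i
def yh (i : Fin n) : ℝ := (p i).2 + r i

variable {r p} (hP : IsSqPacking r p)
include hP

lemma xl_lt_xr (i : Fin n) : xl r p i < xr r p i := by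
  have := hP.1 i; unfold xl xr; linarith

lemma yl_lt_yh (i : Fin n) : yl r p i < yh r p i := by
  have := hP.1 i; unfold yl yh; linarith

/-- contact characterization -/
lemma sqContact_iff (i j : Fin n) :
    SqContact r p i j ↔ i ≠ j ∧ xl r p j ≤ xr r p i ∧ xl r p i ≤ xr r p j ∧
      yl r p j ≤ yh r p i ∧ yl r p i ≤ yh r p j := by
  unfold SqContact
  rw [homSq_eq (r i) (hP.1 i) (p i), homSq_eq (r j) (hP.1 j) (p j),
    Set.prod_inter_prod, Set.prod_nonempty_iff, Set.Icc_inter_Icc, Set.Icc_inter_Icc,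
    Set.nonempty_Icc, Set.nonempty_Icc]
  have hri := hP.1 i
  have hrj := hP.1 j
  constructor
  · rintro ⟨h, hx, hy⟩
    rw [sup_le_iff, le_inf_iff, le_inf_iff] at hx hy
    exact ⟨h, hx.2.1, hx.1.2, hy.2.1, hy.1.2⟩
  · rintro ⟨h, h1, h2, h3, h4⟩
    refine ⟨h, ?_, ?_⟩ <;> rw [sup_le_iff, le_inf_iff, le_inf_iff] <;>
      unfold xl xr yl yh at * <;>
      exact ⟨⟨by linarith, by linarith⟩, by linarith, by linarith⟩

/-- interiors disjoint: no double strict overlap. -/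
lemma no_overlap {i j : Fin n} (hij : i ≠ j) :
    xr r p i ≤ xl r p j ∨ xr r p j ≤ xl r p i ∨ yh r p i ≤ yl r p j ∨ yh r p j ≤ yl r p i := by
  by_contra hc
  push_neg at hc
  obtain ⟨h1, h2, h3, h4⟩ := hc
  have hd := hP.2 i j hij
  rw [interior_homSq (r i) (hP.1 i), interior_homSq (r j) (hP.1 j)] at hd
  have hri := hP.1 i
  have hrj := hP.1 j
  unfold xl xr yl yh at *
  set A := max ((p i).1 - r i) ((p j).1 - r j) with hA
  set B := min ((p i).1 + r i) ((p j).1 + r j) with hB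
  set C := max ((p i).2 - r i) ((p j).2 - r j) with hC
  set D := min ((p i).2 + r i) ((p j).2 + r j) with hD
  have hAB : A < B := max_lt (lt_min (by linarith) h2) (lt_min h1 (by linarith))
  have hCD : C < D := max_lt (lt_min (by linarith) h4) (lt_min h3 (by linarith))
  have hA1 : (p i).1 - r i ≤ A := le_max_left _ _
  have hA2 : (p j).1 - r j ≤ A := le_max_right _ _
  have hB1 : B ≤ (p i).1 + r i := min_le_left _ _
  have hB2 : B ≤ (p j).1 + r j := min_le_right _ _
  have hC1 : (p i).2 - r i ≤ C := le_max_left _ _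
  have hC2 : (p j).2 - r j ≤ C := le_max_right _ _
  have hD1 : D ≤ (p i).2 + r i := min_le_left _ _
  have hD2 : D ≤ (p j).2 + r j := min_le_right _ _
  have hmem : ((A + B) / 2, (C + D) / 2) ∈
      (Set.Ioo ((p i).1 - r i) ((p i).1 + r i) ×ˢ Set.Ioo ((p i).2 - r i) ((p i).2 + r i)) ∩
      (Set.Ioo ((p j).1 - r j) ((p j).1 + r j) ×ˢ Set.Ioo ((p j).2 - r j) ((p j).2 + r j)) := by
    refine ⟨⟨⟨?_, ?_⟩, ?_, ?_⟩, ⟨?_, ?_⟩, ?_, ?_⟩ <;> · simp only []; linarith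
  rw [hd] at hmem
  exact hmem

end SqPack

end GeoAux

open SqLine SqDir SqPack

/-- **Proposition 2.9.** Any homothetic packing of `n ≥ 3` squares has at most `4n - 8`
contacts. -/
theorem contacts_le_four_n_sub_eight (n : ℕ) (hn : 3 ≤ n) (r : Fin n → ℝ)
    (p : Fin n → ℝ × ℝ) (hP : IsSqPacking r p) :
    (contactGraph r p).edgeSet.ncard ≤ 4 * n - 8 := by
  classical
  set XL := SqPack.xl r p with hXL
  set XR := SqPack.xr r p with hXR
  set YL := SqPack.yl r p with hYL
  set YH := SqPack.yh r p with hYH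
  have hxlr : ∀ i, XL i < XR i := xl_lt_xr hP
  have hylh : ∀ i, YL i < YH i := yl_lt_yh hP
  -- same-line disjointness facts
  have hno : ∀ i j : Fin n, i ≠ j →
      XR i ≤ XL j ∨ XR j ≤ XL i ∨ YH i ≤ YL j ∨ YH j ≤ YL i := fun i j hij => no_overlap hP hij
  have hsb_x : ∀ i j : Fin n, i ≠ j → XR i = XR j → YH i ≤ YL j ∨ YH j ≤ YL i := by
    intro i j hij he
    rcases hno i j hij with h | h | h | h
    · exact absurd h (by push_neg; linarith [hxlr i, hxlr j])
    · exact absurd h (by push_neg; linarith [hxlr i, hxlr j])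
    · exact Or.inl h
    · exact Or.inr h
  have hsa_x : ∀ i j : Fin n, i ≠ j → XL i = XL j → YH i ≤ YL j ∨ YH j ≤ YL i := by
    intro i j hij he
    rcases hno i j hij with h | h | h | h
    · exact absurd h (by push_neg; linarith [hxlr i, hxlr j])
    · exact absurd h (by push_neg; linarith [hxlr i, hxlr j])
    · exact Or.inl h
    · exact Or.inr h
  have hsb_y : ∀ i j : Fin n, i ≠ j → YH i = YH j → XR i ≤ XL j ∨ XR j ≤ XL i := by
    intro i j hij he
    rcases hno i j hij with h | h | h | h
    · exact Or.inl h
    · exact Or.inr h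
    · exact absurd h (by push_neg; linarith [hylh i, hylh j])
    · exact absurd h (by push_neg; linarith [hylh i, hylh j])
  have hsa_y : ∀ i j : Fin n, i ≠ j → YL i = YL j → XR i ≤ XL j ∨ XR j ≤ XL i := by
    intro i j hij he
    rcases hno i j hij with h | h | h | h
    · exact Or.inl h
    · exact Or.inr h
    · exact absurd h (by push_neg; linarith [hylh i, hylh j])
    · exact absurd h (by push_neg; linarith [hylh i, hylh j])
  -- the two directional edge sets and corner set
  set Ex := dirE XL XR YL YH with hEx
  set Ey := dirE YL YH XL XR with hEy
  set Mx := dirM XL XR YL YH with hMx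
  set My := dirM YL YH XL XR with hMy
  -- corner sets in the two directions agree in size
  have hMcard : My.card = Mx.card := by
    have himg : My = Mx.image Prod.swap := by
      ext z
      rw [hMy, hMx, mem_dirM]
      constructor
      · rintro ⟨⟨i1, a1, b1⟩, ⟨i2, a2, b2⟩, ⟨i3, a3, b3⟩, ⟨i4, a4, b4⟩⟩
        rw [Finset.mem_image]
        refine ⟨(z.2, z.1), ?_, rfl⟩
        rw [mem_dirM]
        exact ⟨⟨i1, b1, a1⟩, ⟨i3, b3, a3⟩, ⟨i2, b2, a2⟩, ⟨i4, b4, a4⟩⟩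
      · intro hz
        rw [Finset.mem_image] at hz
        obtain ⟨w, hw, rfl⟩ := hz
        rw [mem_dirM] at hw
        obtain ⟨⟨i1, a1, b1⟩, ⟨i2, a2, b2⟩, ⟨i3, a3, b3⟩, ⟨i4, a4, b4⟩⟩ := hw
        exact ⟨⟨i1, b1, a1⟩, ⟨i3, b3, a3⟩, ⟨i2, b2, a2⟩, ⟨i4, b4, a4⟩⟩
    rw [himg, Finset.card_image_of_injective _ Prod.swap_injective]
  -- contact dichotomy
  have hdich : ∀ i j : Fin n, SqContact r p i j →
      ((i, j) ∈ Ex ∨ (j, i) ∈ Ex) ∨ ((i, j) ∈ Ey ∨ (j, i) ∈ Ey) := by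
    intro i j hc
    rw [sqContact_iff hP] at hc
    rw [← hXL, ← hXR, ← hYL, ← hYH] at hc
    obtain ⟨hij, c1, c2, c3, c4⟩ := hc
    rcases hno i j hij with h | h | h | h
    · exact Or.inl (Or.inl (mem_dirE.mpr ⟨le_antisymm h c1, c3, c4⟩))
    · exact Or.inl (Or.inr (mem_dirE.mpr ⟨le_antisymm h c2, c4, c3⟩))
    · exact Or.inr (Or.inl (mem_dirE.mpr ⟨le_antisymm h c3, c1, c2⟩))
    · exact Or.inr (Or.inr (mem_dirE.mpr ⟨le_antisymm h c4, c2, c1⟩))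
  -- the symmetric labelling function on unordered pairs
  set φ : Fin n → Fin n → (Fin n × Fin n) ⊕ (Fin n × Fin n) := fun i j =>
    if (i, j) ∈ Ex then Sum.inl (i, j)
    else if (j, i) ∈ Ex then Sum.inl (j, i)
    else if (i, j) ∈ Ey then Sum.inr (i, j)
    else if (j, i) ∈ Ey then Sum.inr (j, i)
    else Sum.inr (min i j, max i j) with hφ
  have hExasym : ∀ i j : Fin n, (i, j) ∈ Ex → (j, i) ∈ Ex → False := by
    intro i j h1 h2
    have h1' := (mem_dirE.mp h1).1
    have h2' := (mem_dirE.mp h2).1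
    simp only at h1' h2'
    have := hxlr i
    have := hxlr j
    linarith
  have hEyasym : ∀ i j : Fin n, (i, j) ∈ Ey → (j, i) ∈ Ey → False := by
    intro i j h1 h2
    have h1' := (mem_dirE.mp h1).1
    have h2' := (mem_dirE.mp h2).1
    simp only at h1' h2'
    have := hylh i
    have := hylh j
    linarith
  have hφsymm : ∀ i j, φ i j = φ j i := by
    intro i j
    rw [hφ]
    simp only []
    by_cases h1 : (i, j) ∈ Ex
    · have h2 : (j, i) ∉ Ex := fun h => hExasym i j h1 h
      rw [if_pos h1, if_neg h2, if_pos h1]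
    · by_cases h2 : (j, i) ∈ Ex
      · rw [if_neg h1, if_pos h2, if_pos h2]
      · rw [if_neg h1, if_neg h2, if_neg h2, if_neg h1]
        by_cases h3 : (i, j) ∈ Ey
        · have h4 : (j, i) ∉ Ey := fun h => hEyasym i j h3 h
          rw [if_pos h3, if_neg h4, if_pos h3]
        · by_cases h4 : (j, i) ∈ Ey
          · rw [if_neg h3, if_pos h4, if_pos h4]
          · rw [if_neg h3, if_neg h4, if_neg h4, if_neg h3,
              min_comm, max_comm]
  set f : Sym2 (Fin n) → (Fin n × Fin n) ⊕ (Fin n × Fin n) := Sym2.lift ⟨φ, hφsymm⟩ with hf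
  -- unordered pair recovery
  set unop : (Fin n × Fin n) ⊕ (Fin n × Fin n) → Sym2 (Fin n) :=
    Sum.elim (fun q => s(q.1, q.2)) (fun q => s(q.1, q.2)) with hunop
  have hrecov : ∀ s : Sym2 (Fin n), unop (f s) = s := by
    intro s
    induction s with
    | _ i j =>
      have hminmax : (s(min i j, max i j) : Sym2 (Fin n)) = s(i, j) := by
        rcases le_total i j with h | h
        · rw [min_eq_left h, max_eq_right h]
        · rw [min_eq_right h, max_eq_left h]
          exact Sym2.eq_swap
      rw [hf]
      simp only [Sym2.lift_mk]
      rw [hφ]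
      simp only []
      by_cases h1 : (i, j) ∈ Ex
      · rw [if_pos h1]; rfl
      · rw [if_neg h1]
        by_cases h2 : (j, i) ∈ Ex
        · rw [if_pos h2]
          exact Sym2.eq_swap
        · rw [if_neg h2]
          by_cases h3 : (i, j) ∈ Ey
          · rw [if_pos h3]; rfl
          · rw [if_neg h3]
            by_cases h4 : (j, i) ∈ Ey
            · rw [if_pos h4]
              exact Sym2.eq_swap
            · rw [if_neg h4]
              exact hminmax
  -- edges map into Ex ⊎ Ey
  set G := contactGraph r p with hG
  have hadj : ∀ i j : Fin n, G.Adj i j ↔ SqContact r p i j := fun i j => Iff.rfl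
  have hfmem : ∀ s ∈ G.edgeSet.toFinset, f s ∈ Ex.disjSum Ey := by
    intro s hs
    rw [Set.mem_toFinset] at hs
    induction s with
    | _ i j =>
      have hc : SqContact r p i j := (SimpleGraph.mem_edgeSet G).mp hs
      rw [hf]
      simp only [Sym2.lift_mk]
      rw [hφ]
      simp only []
      split_ifs with h1 h2 h3 h4
      · exact Finset.inl_mem_disjSum.mpr h1
      · exact Finset.inl_mem_disjSum.mpr h2
      · exact Finset.inr_mem_disjSum.mpr h3
      · exact Finset.inr_mem_disjSum.mpr h4
      · rcases hdich i j hc with (h | h) | (h | h)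
        · exact absurd h h1
        · exact absurd h h2
        · exact absurd h h3
        · exact absurd h h4
  -- corner extraction functions
  haveI : Nonempty (Fin n) := ⟨⟨0, by omega⟩⟩
  set SW : ℝ × ℝ → Fin n := fun z =>
    if h : ∃ i, XR i = z.1 ∧ YH i = z.2 then h.choose else Classical.arbitrary _ with hSW
  set NW : ℝ × ℝ → Fin n := fun z =>
    if h : ∃ i, XR i = z.1 ∧ YL i = z.2 then h.choose else Classical.arbitrary _ with hNW
  set SE : ℝ × ℝ → Fin n := fun z =>
    if h : ∃ i, XL i = z.1 ∧ YH i = z.2 then h.choose else Classical.arbitrary _ with hSE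
  set NE : ℝ × ℝ → Fin n := fun z =>
    if h : ∃ i, XL i = z.1 ∧ YL i = z.2 then h.choose else Classical.arbitrary _ with hNE
  have hSWspec : ∀ z ∈ Mx, XR (SW z) = z.1 ∧ YH (SW z) = z.2 := by
    intro z hz
    obtain ⟨h1, -, -, -⟩ := mem_dirM.mp hz
    rw [hSW]
    simp only []
    rw [dif_pos h1]
    exact h1.choose_spec
  have hNWspec : ∀ z ∈ Mx, XR (NW z) = z.1 ∧ YL (NW z) = z.2 := by
    intro z hz
    obtain ⟨-, h2, -, -⟩ := mem_dirM.mp hz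
    rw [hNW]
    simp only []
    rw [dif_pos h2]
    exact h2.choose_spec
  have hSEspec : ∀ z ∈ Mx, XL (SE z) = z.1 ∧ YH (SE z) = z.2 := by
    intro z hz
    obtain ⟨-, -, h3, -⟩ := mem_dirM.mp hz
    rw [hSE]
    simp only []
    rw [dif_pos h3]
    exact h3.choose_spec
  have hNEspec : ∀ z ∈ Mx, XL (NE z) = z.1 ∧ YL (NE z) = z.2 := by
    intro z hz
    obtain ⟨-, -, -, h4⟩ := mem_dirM.mp hz
    rw [hNE]
    simp only []
    rw [dif_pos h4]
    exact h4.choose_spec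
  set g : (ℝ × ℝ) × Bool → (Fin n × Fin n) ⊕ (Fin n × Fin n) := fun w =>
    if w.2 then Sum.inr (SW w.1, NE w.1) else Sum.inr (SE w.1, NW w.1) with hg
  -- diagonal pairs are y-edges
  have hdiag1 : ∀ z ∈ Mx, (SW z, NE z) ∈ Ey ∧ (SW z, NE z) ∈ Ex := by
    intro z hz
    obtain ⟨hsw1, hsw2⟩ := hSWspec z hz
    obtain ⟨hne1, hne2⟩ := hNEspec z hz
    have g1 := hxlr (SW z)
    have g2 := hxlr (NE z)
    have g3 := hylh (SW z)
    have g4 := hylh (NE z)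
    constructor
    · exact mem_dirE.mpr ⟨by simp only []; linarith, by simp only []; linarith,
        by simp only []; linarith⟩
    · exact mem_dirE.mpr ⟨by simp only []; linarith, by simp only []; linarith,
        by simp only []; linarith⟩
  have hdiag2 : ∀ z ∈ Mx, (SE z, NW z) ∈ Ey ∧ (NW z, SE z) ∈ Ex := by
    intro z hz
    obtain ⟨hse1, hse2⟩ := hSEspec z hz
    obtain ⟨hnw1, hnw2⟩ := hNWspec z hz
    have g1 := hxlr (SE z)
    have g2 := hxlr (NW z)
    have g3 := hylh (SE z)
    have g4 := hylh (NW z)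
    constructor
    · exact mem_dirE.mpr ⟨by simp only []; linarith, by simp only []; linarith,
        by simp only []; linarith⟩
    · exact mem_dirE.mpr ⟨by simp only []; linarith, by simp only []; linarith,
        by simp only []; linarith⟩
  -- the big injection
  set Src := (G.edgeSet.toFinset).disjSum (Mx ×ˢ (Finset.univ : Finset Bool)) with hSrc
  set F : Sym2 (Fin n) ⊕ ((ℝ × ℝ) × Bool) → (Fin n × Fin n) ⊕ (Fin n × Fin n) :=
    Sum.elim f g with hF
  have hgmem : ∀ w ∈ Mx ×ˢ (Finset.univ : Finset Bool), g w ∈ Ex.disjSum Ey := by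
    intro w hw
    have hwM : w.1 ∈ Mx := (Finset.mem_product.mp hw).1
    rw [hg]
    simp only []
    by_cases hb : w.2
    · rw [if_pos hb]
      exact Finset.inr_mem_disjSum.mpr (hdiag1 w.1 hwM).1
    · rw [if_neg hb]
      exact Finset.inr_mem_disjSum.mpr (hdiag2 w.1 hwM).1
  -- f never lands on a diagonal pair
  have hfnotdiag : ∀ s ∈ G.edgeSet.toFinset, ∀ q : Fin n × Fin n,
      f s = Sum.inr q → (q.1, q.2) ∉ Ex ∧ (q.2, q.1) ∉ Ex := by
    intro s hs q hfs
    rw [Set.mem_toFinset] at hs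
    induction s with
    | _ i j =>
      have hc : SqContact r p i j := (SimpleGraph.mem_edgeSet G).mp hs
      rw [hf] at hfs
      simp only [Sym2.lift_mk] at hfs
      rw [hφ] at hfs
      simp only [] at hfs
      by_cases h1 : (i, j) ∈ Ex
      · rw [if_pos h1] at hfs
        exact absurd hfs (Sum.inl_ne_inr)
      · rw [if_neg h1] at hfs
        by_cases h2 : (j, i) ∈ Ex
        · rw [if_pos h2] at hfs
          exact absurd hfs (Sum.inl_ne_inr)
        · rw [if_neg h2] at hfs
          by_cases h3 : (i, j) ∈ Ey
          · rw [if_pos h3] at hfs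
            have hq : (i, j) = q := Sum.inr_injective hfs
            rw [← hq]
            exact ⟨h1, h2⟩
          · rw [if_neg h3] at hfs
            by_cases h4 : (j, i) ∈ Ey
            · rw [if_pos h4] at hfs
              have hq : (j, i) = q := Sum.inr_injective hfs
              rw [← hq]
              exact ⟨h2, h1⟩
            · rcases hdich i j hc with (h | h) | (h | h)
              · exact absurd h h1
              · exact absurd h h2
              · exact absurd h h3
              · exact absurd h h4
  have hginj : ∀ w ∈ Mx ×ˢ (Finset.univ : Finset Bool),
      ∀ w' ∈ Mx ×ˢ (Finset.univ : Finset Bool), g w = g w' → w = w' := by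
    intro w hw w' hw' hgw
    have hwM : w.1 ∈ Mx := (Finset.mem_product.mp hw).1
    have hwM' : w'.1 ∈ Mx := (Finset.mem_product.mp hw').1
    rw [hg] at hgw
    simp only [] at hgw
    have hext : ∀ z z' : ℝ × ℝ, z ∈ Mx → z' ∈ Mx → (SW z, NE z) = (SE z', NW z') → False := by
      intro z z' hz hz' heq
      have he1 : SW z = SE z' := congrArg Prod.fst heq
      have he2 : NE z = NW z' := congrArg Prod.snd heq
      have h1 := hSWspec z hz
      have h2 := hNEspec z hz
      have h3 := hSEspec z' hz'
      have h4 := hNWspec z' hz'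
      rw [he1] at h1
      rw [he2] at h2
      have g1 := hxlr (SE z')
      have g2 := hxlr (NW z')
      have k1 : z'.1 < z.1 := by linarith [h3.1, h1.1]
      have k2 : z.1 < z'.1 := by linarith [h2.1, h4.1]
      linarith
    by_cases hb : w.2 <;> by_cases hb' : w'.2
    · rw [if_pos hb, if_pos hb'] at hgw
      have heq := Sum.inr.inj hgw
      have h1 := hSWspec w.1 hwM
      have h1' := hSWspec w'.1 hwM'
      have hz : w.1 = w'.1 := by
        have e1 : SW w.1 = SW w'.1 := (Prod.ext_iff.mp heq).1
        rw [Prod.ext_iff]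
        rw [e1] at h1
        constructor
        · rw [← h1.1, ← h1'.1]
        · rw [← h1.2, ← h1'.2]
      rw [Prod.ext_iff]
      rw [Bool.eq_iff_iff]
      exact ⟨hz, by rw [hb, hb']⟩
    · rw [if_pos hb, if_neg hb'] at hgw
      exact absurd (Sum.inr.inj hgw) (fun h => hext w.1 w'.1 hwM hwM' h)
    · rw [if_neg hb, if_pos hb'] at hgw
      exact absurd (Sum.inr.inj hgw).symm (fun h => hext w'.1 w.1 hwM' hwM h)
    · rw [if_neg hb, if_neg hb'] at hgw
      have heq := Sum.inr.inj hgw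
      have h1 := hSEspec w.1 hwM
      have h1' := hSEspec w'.1 hwM'
      have hz : w.1 = w'.1 := by
        have e1 : SE w.1 = SE w'.1 := (Prod.ext_iff.mp heq).1
        rw [Prod.ext_iff]
        rw [e1] at h1
        constructor
        · rw [← h1.1, ← h1'.1]
        · rw [← h1.2, ← h1'.2]
      rw [Prod.ext_iff]
      rw [Bool.eq_iff_iff]
      exact ⟨hz, by simp at hb hb'; rw [hb, hb']⟩
  have hinj : Set.InjOn F Src := by
    intro u hu v hv huv
    rw [hSrc, Finset.mem_coe, Finset.mem_disjSum] at hu hv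
    rcases hu with ⟨s, hs, rfl⟩ | ⟨w, hw, rfl⟩ <;> rcases hv with ⟨s', hs', rfl⟩ | ⟨w', hw', rfl⟩
    · rw [hF] at huv
      simp only [Sum.elim_inl] at huv
      have := congrArg unop huv
      rw [hrecov s, hrecov s'] at this
      rw [this]
    · -- f s = g w' : impossible
      exfalso
      rw [hF] at huv
      simp only [Sum.elim_inl, Sum.elim_inr] at huv
      have hwM : w'.1 ∈ Mx := (Finset.mem_product.mp hw').1
      rw [hg] at huv
      simp only [] at huv
      by_cases hb : w'.2
      · rw [if_pos hb] at huv
        exact (hfnotdiag s hs _ huv).1 (hdiag1 w'.1 hwM).2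
      · rw [if_neg hb] at huv
        exact (hfnotdiag s hs _ huv).2 (hdiag2 w'.1 hwM).2
    · exfalso
      rw [hF] at huv
      simp only [Sum.elim_inl, Sum.elim_inr] at huv
      have hwM : w.1 ∈ Mx := (Finset.mem_product.mp hw).1
      rw [hg] at huv
      simp only [] at huv
      by_cases hb : w.2
      · rw [if_pos hb] at huv
        exact (hfnotdiag s' hs' _ huv.symm).1 (hdiag1 w.1 hwM).2
      · rw [if_neg hb] at huv
        exact (hfnotdiag s' hs' _ huv.symm).2 (hdiag2 w.1 hwM).2
    · rw [hF] at huv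
      simp only [Sum.elim_inr] at huv
      rw [hginj w hw w' hw' huv]
  have hmaps : ∀ u ∈ Src, F u ∈ Ex.disjSum Ey := by
    intro u hu
    rw [hSrc, Finset.mem_disjSum] at hu
    rcases hu with ⟨s, hs, rfl⟩ | ⟨w, hw, rfl⟩
    · rw [hF]
      simp only [Sum.elim_inl]
      exact hfmem s hs
    · rw [hF]
      simp only [Sum.elim_inr]
      exact hgmem w hw
  have hcount : G.edgeSet.toFinset.card + Mx.card * 2 ≤ Ex.card + Ey.card := by
    have h0 := Finset.card_le_card_of_injOn F hmaps hinj
    rw [hSrc, Finset.card_disjSum, Finset.card_disjSum, Finset.card_product,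
      Finset.card_univ, Fintype.card_bool] at h0
    omega
  -- master inequalities
  have hmx := dir_master XL XR YL YH hxlr hylh hsb_x hsa_x
  have hmy := dir_master YL YH XL XR hylh hxlr hsb_y hsa_y
  have hrx := dir_roots XL XR YL YH hxlr (by rw [Fintype.card_fin]; omega)
  have hry := dir_roots YL YH XL XR hylh (by rw [Fintype.card_fin]; omega)
  rw [← hEx, ← hMx] at hmx
  rw [← hEx] at hrx
  rw [← hEy, ← hMy] at hmy
  rw [← hEy] at hry
  rw [Fintype.card_fin] at hmx hmy
  rw [hMcard] at hmy
  -- conclude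
  have hfinal : G.edgeSet.toFinset.card ≤ 4 * n - 8 := by omega
  rw [Set.ncard_eq_toFinset_card']
  exact hfinal
end
end
end

section
/- Let P be a homothetic packing of n ≥ 6 squares whose radii satisfy the weak generic condition. Suppose there exists a cycle (n_1, …, n_k) in the subgraph ([n], E_x) such that for each i ∈ [k] (indices taken cyclically, n_0 = n_k and n_{k+1} = n_1), neither x_{n_{i−1}} < x_{n_i} < x_{n_{i+1}} nor x_{n_{i+1}} < x_{n_i} < x_{n_{i−1}} holds. Then k = 4 and the four squares S_{n_1}, S_{n_2}, S_{n_3}, S_{n_4} share a corner. -/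
open Finset Real

noncomputable section

lemma ZZ_homSq_eq {r : ℝ} (hr : 0 < r) (p : ℝ × ℝ) :
    homSq r p = Set.Icc (p.1 - r) (p.1 + r) ×ˢ Set.Icc (p.2 - r) (p.2 + r) := by
  ext ⟨x, y⟩
  constructor
  · rintro ⟨⟨sx, sy⟩, ⟨h1, h2, h3, h4⟩, h⟩
    have hx : r * sx + p.1 = x := congrArg Prod.fst h
    have hy : r * sy + p.2 = y := congrArg Prod.snd h
    constructor <;> constructor <;> simp only [Set.mem_Icc] <;> nlinarith
  · rintro ⟨⟨hx1, hx2⟩, ⟨hy1, hy2⟩⟩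
    refine ⟨((x - p.1)/r, (y - p.2)/r), ⟨?_, ?_, ?_, ?_⟩, ?_⟩
    · rw [le_div_iff₀ hr]; linarith
    · rw [div_le_iff₀ hr]; linarith
    · rw [le_div_iff₀ hr]; linarith
    · rw [div_le_iff₀ hr]; linarith
    · show (r * ((x - p.1)/r) + p.1, r * ((y - p.2)/r) + p.2) = (x, y)
      field_simp
      simp

lemma ZZ_mem_homSq {r : ℝ} (hr : 0 < r) {p q : ℝ × ℝ} :
    q ∈ homSq r p ↔ |q.1 - p.1| ≤ r ∧ |q.2 - p.2| ≤ r := by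
  rw [ZZ_homSq_eq hr, Set.mem_prod, Set.mem_Icc, Set.mem_Icc, abs_le, abs_le]
  constructor <;> rintro ⟨⟨a, b⟩, c, d⟩ <;> exact ⟨⟨by linarith, by linarith⟩, by linarith, by linarith⟩

lemma ZZ_mem_interior_homSq {r : ℝ} (hr : 0 < r) {p q : ℝ × ℝ} :
    q ∈ interior (homSq r p) ↔ |q.1 - p.1| < r ∧ |q.2 - p.2| < r := by
  rw [ZZ_homSq_eq hr, interior_prod_eq, interior_Icc, interior_Icc, Set.mem_prod,
    Set.mem_Ioo, Set.mem_Ioo, abs_lt, abs_lt]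
  constructor <;> rintro ⟨⟨a, b⟩, c, d⟩ <;> exact ⟨⟨by linarith, by linarith⟩, by linarith, by linarith⟩

lemma ZZ_sep_of_disjoint {ri rj : ℝ} (hi : 0 < ri) (hj : 0 < rj) {pi pj : ℝ × ℝ}
    (h : interior (homSq ri pi) ∩ interior (homSq rj pj) = ∅)
    (hx : |pi.1 - pj.1| < ri + rj) : ri + rj ≤ |pi.2 - pj.2| := by
  by_contra hy
  push_neg at hy
  set z : ℝ × ℝ := ((rj * pi.1 + ri * pj.1)/(ri + rj), (rj * pi.2 + ri * pj.2)/(ri + rj)) with hz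
  have hrr : 0 < ri + rj := by linarith
  have e1 : z.1 - pi.1 = ri * (pj.1 - pi.1) / (ri + rj) := by simp only [hz]; field_simp; ring
  have e2 : z.2 - pi.2 = ri * (pj.2 - pi.2) / (ri + rj) := by simp only [hz]; field_simp; ring
  have e3 : z.1 - pj.1 = rj * (pi.1 - pj.1) / (ri + rj) := by simp only [hz]; field_simp; ring
  have e4 : z.2 - pj.2 = rj * (pi.2 - pj.2) / (ri + rj) := by simp only [hz]; field_simp; ring
  have hzi : z ∈ interior (homSq ri pi) := by
    rw [ZZ_mem_interior_homSq hi]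
    constructor
    · rw [e1, abs_div, abs_mul, abs_of_pos hi, abs_of_pos hrr, div_lt_iff₀ hrr,
        abs_sub_comm]
      nlinarith
    · rw [e2, abs_div, abs_mul, abs_of_pos hi, abs_of_pos hrr, div_lt_iff₀ hrr,
        abs_sub_comm]
      nlinarith
  have hzj : z ∈ interior (homSq rj pj) := by
    rw [ZZ_mem_interior_homSq hj]
    constructor
    · rw [e3, abs_div, abs_mul, abs_of_pos hj, abs_of_pos hrr, div_lt_iff₀ hrr]
      nlinarith
    · rw [e4, abs_div, abs_mul, abs_of_pos hj, abs_of_pos hrr, div_lt_iff₀ hrr]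
      nlinarith
  have : z ∈ (∅ : Set (ℝ × ℝ)) := h ▸ ⟨hzi, hzj⟩
  exact this
/-- Core 1-D lemma for the `k ≥ 6` case: the jumped interval equals the jumper. -/
lemma ZZ_key1d {uA sA uP sP uQ sQ uT sT u1 s1 u2 s2 : ℝ}
    (hsA : 0 < sA) (hs1 : 0 < s1) (hs2 : 0 < s2)
    (hAP : |uA - uP| ≤ sA + sP) (hAQ : |uA - uQ| ≤ sA + sQ)
    (hPT : uP + sP ≤ uT - sT) (hTQ : uT + sT ≤ uQ - sQ)
    (hT1 : |uT - u1| ≤ sT + s1) (hT2 : |uT - u2| ≤ sT + s2)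
    (h1A : sA + s1 ≤ |uA - u1|) (h2A : sA + s2 ≤ |uA - u2|)
    (h12 : s1 + s2 ≤ |u1 - u2|) : sT = sA := by
  have hAP' := abs_le.mp hAP
  have hAQ' := abs_le.mp hAQ
  have hT1' := abs_le.mp hT1
  have hT2' := abs_le.mp hT2
  -- A ⊇ T
  have hα : uA - sA ≤ uT - sT := by linarith [hAP'.1]
  have hγ : uT + sT ≤ uA + sA := by linarith [hAQ'.2]
  -- each neighbour of T is below or above A, touching T at the corresponding end
  have hN : ∀ u s : ℝ, 0 < s → sA + s ≤ |uA - u| → |uT - u| ≤ sT + s →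
      (u + s = uA - sA ∧ uT - sT = uA - sA) ∨ (u - s = uA + sA ∧ uT + sT = uA + sA) := by
    intro u s hs hsep hct
    have hct' := abs_le.mp hct
    rcases le_abs.mp hsep with h | h
    · left; constructor <;> linarith [hct'.2]
    · right; constructor <;> linarith [hct'.1]
  rcases hN u1 s1 hs1 h1A hT1 with h1 | h1 <;>
    rcases hN u2 s2 hs2 h2A hT2 with h2 | h2
  · exfalso
    rcases le_abs.mp h12 with h | h <;> linarith [h1.1, h2.1]
  · linarith [h1.2, h2.2]
  · linarith [h1.2, h2.2]
  · exfalso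
    rcases le_abs.mp h12 with h | h <;> linarith [h1.1, h2.1]
/-- Core 1-D lemma for the `k = 4` case. -/
lemma ZZ_quadY {u0 s0 u1 s1 u2 s2 u3 s3 : ℝ}
    (h0 : 0 < s0) (h1 : 0 < s1) (h2 : 0 < s2) (h3 : 0 < s3)
    (h02 : s0 + s2 ≤ |u0 - u2|) (h13 : s1 + s3 ≤ |u1 - u3|)
    (h01 : |u0 - u1| ≤ s0 + s1) (h12 : |u1 - u2| ≤ s1 + s2)
    (h23 : |u2 - u3| ≤ s2 + s3) (h30 : |u3 - u0| ≤ s3 + s0) :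
    ∃ t, |t - u0| = s0 ∧ |t - u1| = s1 ∧ |t - u2| = s2 ∧ |t - u3| = s3 ∧
      ∀ q : ℝ, |q - u0| ≤ s0 → |q - u2| ≤ s2 → q = t := by
  have h01' := abs_le.mp h01
  have h12' := abs_le.mp h12
  have h23' := abs_le.mp h23
  have h30' := abs_le.mp h30
  rcases le_abs.mp h02 with h | h <;> rcases le_abs.mp h13 with g | g
  -- case u2 + s2 ≤ u0 - s0 , u3 + s3 ≤ u1 - s1
  · refine ⟨u0 - s0, ?_, ?_, ?_, ?_, ?_⟩
    · rw [abs_eq h0.le]; right; ring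
    · have e : u0 - s0 = u1 - s1 := by linarith [h01'.2, h12'.1, h23'.2, h30'.1]
      rw [e, abs_eq h1.le]; right; ring
    · have e : u0 - s0 = u2 + s2 := by linarith [h01'.2, h12'.1, h23'.2, h30'.1]
      rw [e, abs_eq h2.le]; left; ring
    · have e : u0 - s0 = u3 + s3 := by linarith [h01'.2, h12'.1, h23'.2, h30'.1]
      rw [e, abs_eq h3.le]; left; ring
    · intro q hq0 hq2
      have a0 := (abs_le.mp hq0).1
      have a2 := (abs_le.mp hq2).2
      have e : u0 - s0 = u2 + s2 := by linarith [h01'.2, h12'.1, h23'.2, h30'.1]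
      linarith
  · refine ⟨u0 - s0, ?_, ?_, ?_, ?_, ?_⟩
    · rw [abs_eq h0.le]; right; ring
    · have e : u0 - s0 = u1 + s1 := by linarith [h30'.2, h23'.1, h12'.2, h01'.1]
      rw [e, abs_eq h1.le]; left; ring
    · have e : u0 - s0 = u2 + s2 := by linarith [h30'.2, h23'.1, h12'.2, h01'.1]
      rw [e, abs_eq h2.le]; left; ring
    · have e : u0 - s0 = u3 - s3 := by linarith [h30'.2, h23'.1, h12'.2, h01'.1]
      rw [e, abs_eq h3.le]; right; ring
    · intro q hq0 hq2
      have a0 := (abs_le.mp hq0).1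
      have a2 := (abs_le.mp hq2).2
      have e : u0 - s0 = u2 + s2 := by linarith [h30'.2, h23'.1, h12'.2, h01'.1]
      linarith
  · refine ⟨u0 + s0, ?_, ?_, ?_, ?_, ?_⟩
    · rw [abs_eq h0.le]; left; ring
    · have e : u0 + s0 = u1 - s1 := by linarith [h01'.2, h12'.2, h23'.1, h30'.1]
      rw [e, abs_eq h1.le]; right; ring
    · have e : u0 + s0 = u2 - s2 := by linarith [h01'.2, h12'.2, h23'.1, h30'.1]
      rw [e, abs_eq h2.le]; right; ring
    · have e : u0 + s0 = u3 + s3 := by linarith [h01'.2, h12'.2, h23'.1, h30'.1]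
      rw [e, abs_eq h3.le]; left; ring
    · intro q hq0 hq2
      have a0 := (abs_le.mp hq0).2
      have a2 := (abs_le.mp hq2).1
      have e : u0 + s0 = u2 - s2 := by linarith [h01'.2, h12'.2, h23'.1, h30'.1]
      linarith
  · refine ⟨u0 + s0, ?_, ?_, ?_, ?_, ?_⟩
    · rw [abs_eq h0.le]; left; ring
    · have e : u0 + s0 = u1 + s1 := by linarith [h30'.2, h23'.2, h12'.1, h01'.1]
      rw [e, abs_eq h1.le]; left; ring
    · have e : u0 + s0 = u2 - s2 := by linarith [h30'.2, h23'.2, h12'.1, h01'.1]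
      rw [e, abs_eq h2.le]; right; ring
    · have e : u0 + s0 = u3 - s3 := by linarith [h30'.2, h23'.2, h12'.1, h01'.1]
      rw [e, abs_eq h3.le]; right; ring
    · intro q hq0 hq2
      have a0 := (abs_le.mp hq0).2
      have a2 := (abs_le.mp hq2).1
      have e : u0 + s0 = u2 - s2 := by linarith [h30'.2, h23'.2, h12'.1, h01'.1]
      linarith

/-- **Lemma 3.2.** Let `P` be a homothetic packing of `n ≥ 6` squares whose radii satisfy
the weak generic condition. If `([n], E_x)` contains a cycle `(c 0, …, c (k-1))`
(indices cyclic) such that for each `i`, neither `x_{c(i-1)} < x_{c i} < x_{c(i+1)}` nor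
`x_{c(i+1)} < x_{c i} < x_{c(i-1)}`, then `k = 4` and the four squares of the cycle share
a corner. -/
theorem zigzag_cycle (n : ℕ) (hn : 6 ≤ n) (r : Fin n → ℝ) (p : Fin n → ℝ × ℝ)
    (hP : IsSqPacking r p) (hWG : WeakGeneric r)
    (k : ℕ) (hk : 3 ≤ k) (c : ZMod k → Fin n) (hinj : Function.Injective c)
    (hcyc : ∀ i : ZMod k, XContact r p (c i) (c (i + 1)))
    (hzig : ∀ i : ZMod k,
      ¬((p (c (i - 1))).1 < (p (c i)).1 ∧ (p (c i)).1 < (p (c (i + 1))).1) ∧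
      ¬((p (c (i + 1))).1 < (p (c i)).1 ∧ (p (c i)).1 < (p (c (i - 1))).1)) :
    k = 4 ∧ ShareCorner r p (c 0) (c 1) (c 2) (c 3) := by
  haveI : NeZero k := ⟨by omega⟩
  obtain ⟨hrpos, hdisj⟩ := hP
  set x : ZMod k → ℝ := fun i => (p (c i)).1 with hxdef
  set u : ZMod k → ℝ := fun i => (p (c i)).2 with hudef
  set s : ZMod k → ℝ := fun i => r (c i) with hsdef
  have hs : ∀ i, 0 < s i := fun i => hrpos (c i)
  have hxc : ∀ i : ZMod k, s i + s (i+1) = |x i - x (i+1)| := fun i => (hcyc i).2.1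
  have hadj : ∀ i : ZMod k, |u i - u (i+1)| ≤ s i + s (i+1) := by
    intro i
    have h1 := (hcyc i).2.2
    have h2 := hxc i
    calc |u i - u (i+1)| ≤ |x i - x (i+1)| := h1
    _ = s i + s (i+1) := h2.symm
  set e : ZMod k → ℝ := fun i => if x i < x (i+1) then 1 else -1 with hedef
  have he1 : ∀ i, e i = 1 ∨ e i = -1 := by
    intro i
    by_cases h : x i < x (i+1) <;> simp [hedef, h]
  have he : ∀ i, x (i+1) = x i + e i * (s i + s (i+1)) := by
    intro i
    have h2 := hxc i
    by_cases h : x i < x (i+1)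
    · have ha : |x i - x (i+1)| = -(x i - x (i+1)) := abs_of_neg (by linarith)
      rw [ha] at h2
      simp only [hedef, if_pos h]
      linarith
    · have hle : x (i+1) ≤ x i := not_lt.mp h
      have ha : |x i - x (i+1)| = x i - x (i+1) := abs_of_nonneg (by linarith)
      rw [ha] at h2
      simp only [hedef, if_neg h]
      linarith
  have halt : ∀ i : ZMod k, e (i+1) = -e i := by
    intro i
    rcases he1 i with h | h <;> rcases he1 (i+1) with h' | h'
    · exfalso
      have g1 : x i < x (i+1) := by
        have := he i; rw [h] at this; nlinarith [hs i, hs (i+1)]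
      have g2 : x (i+1) < x (i+1+1) := by
        have := he (i+1); rw [h'] at this; nlinarith [hs (i+1), hs (i+1+1)]
      have hidx : i+1-1 = i := by ring
      have g1' : x (i+1-1) < x (i+1) := by rw [hidx]; exact g1
      exact (hzig (i+1)).1 ⟨g1', g2⟩
    · rw [h, h']
    · rw [h, h']; norm_num
    · exfalso
      have g1 : x (i+1) < x i := by
        have := he i; rw [h] at this; nlinarith [hs i, hs (i+1)]
      have g2 : x (i+1+1) < x (i+1) := by
        have := he (i+1); rw [h'] at this; nlinarith [hs (i+1), hs (i+1+1)]
      have hidx : i+1-1 = i := by ring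
      have g1' : x (i+1) < x (i+1-1) := by rw [hidx]; exact g1
      exact (hzig (i+1)).2 ⟨g2, g1'⟩
  have hstep : ∀ j : ZMod k, x (j+1) + e (j+1) * s (j+1) = x j + e j * s j := by
    intro j
    rw [he j, halt j]; ring
  have hnat : ∀ m : ℕ, x (m : ZMod k) + e (m : ZMod k) * s (m : ZMod k) = x 0 + e 0 * s 0 := by
    intro m
    induction m with
    | zero => norm_num
    | succ m ih =>
        have hc : ((m+1 : ℕ) : ZMod k) = (m : ZMod k) + 1 := by push_cast; ring
        rw [hc, hstep]; exact ih
  have hline : ∀ i : ZMod k, x i + e i * s i = x 0 + e 0 * s 0 := by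
    intro i
    have := hnat i.val
    rwa [ZMod.natCast_rightInverse i] at this
  have hsep : ∀ i j : ZMod k, i ≠ j → e i = e j → s i + s j ≤ |u i - u j| := by
    intro i j hij hee
    have hcij : c i ≠ c j := fun h => hij (hinj h)
    have hd := hdisj (c i) (c j) hcij
    have hx1 : x i = (x 0 + e 0 * s 0) - e i * s i := by have := hline i; linarith
    have hx2 : x j = (x 0 + e 0 * s 0) - e j * s j := by have := hline j; linarith
    have hdx : x i - x j = e i * (s j - s i) := by rw [hx1, hx2, hee]; ring
    have hdxlt : |x i - x j| < s i + s j := by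
      rw [hdx, abs_mul]
      have h1 : |s j - s i| < s i + s j := by
        rw [abs_sub_lt_iff]; constructor <;> linarith [hs i, hs j]
      rcases he1 i with h | h <;> rw [h] <;> simp only [abs_one, abs_neg, one_mul] <;>
        linarith
    exact ZZ_sep_of_disjoint (hs i) (hs j) hd hdxlt
  have hne : ∀ i j : ZMod k, i ≠ j → e i = e j → u i ≠ u j := by
    intro i j hij hee h
    have := hsep i j hij hee
    rw [h, sub_self, abs_zero] at this
    linarith [hs i, hs j]
  -- k is even
  have heven : Even k := by
    have hpow : ∀ m : ℕ, e (m : ZMod k) = (-1)^m * e 0 := by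
      intro m
      induction m with
      | zero => norm_num
      | succ m ih =>
          have hc : ((m+1 : ℕ) : ZMod k) = (m : ZMod k) + 1 := by push_cast; ring
          rw [hc, halt, ih, pow_succ]; ring
    have hk0 := hpow k
    rw [ZMod.natCast_self] at hk0
    have hp1 : ((-1:ℝ))^k = 1 := by
      rcases he1 0 with h | h <;> rw [h] at hk0 <;> linarith
    rcases Nat.even_or_odd k with h' | h'
    · exact h'
    · exfalso; rw [h'.neg_one_pow] at hp1; norm_num at hp1
  have hk46 : k = 4 ∨ 6 ≤ k := by
    obtain ⟨m, hm⟩ := heven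
    omega
  rcases hk46 with hk4 | hk6
  · -- k = 4 : find the shared corner
    subst hk4
    have q0 := halt 0
    have q1 := halt 1
    have q2 := halt 2
    rw [show (0:ZMod 4)+1 = 1 from by decide] at q0
    rw [show (1:ZMod 4)+1 = 2 from by decide] at q1
    rw [show (2:ZMod 4)+1 = 3 from by decide] at q2
    have ha0 := hadj 0
    have ha1 := hadj 1
    have ha2 := hadj 2
    have ha3 := hadj 3
    rw [show (0:ZMod 4)+1 = 1 from by decide] at ha0
    rw [show (1:ZMod 4)+1 = 2 from by decide] at ha1
    rw [show (2:ZMod 4)+1 = 3 from by decide] at ha2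
    rw [show (3:ZMod 4)+1 = 0 from by decide] at ha3
    have h02 := hsep 0 2 (by decide) (by linarith)
    have h13 := hsep 1 3 (by decide) (by linarith)
    obtain ⟨t, ht0, ht1, ht2, ht3, huniq⟩ :=
      ZZ_quadY (hs 0) (hs 1) (hs 2) (hs 3) h02 h13 ha0 ha1 ha2 ha3
    set a : ℝ := x 0 + e 0 * s 0 with hadef
    have hcx : ∀ i : ZMod 4, |a - x i| = s i := by
      intro i
      have h' : a - x i = e i * s i := by have := hline i; linarith
      rw [h', abs_mul]
      rcases he1 i with h | h <;> rw [h] <;>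
        simp [abs_of_pos (hs i)]
    have hty : ∀ i : ZMod 4, |t - u i| = s i := by
      have hcases : ∀ j : ZMod 4, j = 0 ∨ j = 1 ∨ j = 2 ∨ j = 3 := by decide
      intro i
      rcases hcases i with rfl | rfl | rfl | rfl <;> assumption
    have hmem : ∀ i : ZMod 4, ((a, t) : ℝ × ℝ) ∈ homSq (r (c i)) (p (c i)) := by
      intro i
      rw [ZZ_mem_homSq (hs i)]
      exact ⟨le_of_eq (hcx i), le_of_eq (hty i)⟩
    refine ⟨rfl, (a, t), ?_, ⟨hcx 0, ht0⟩, ⟨hcx 1, ht1⟩, ⟨hcx 2, ht2⟩, ⟨hcx 3, ht3⟩⟩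
    rw [Set.eq_singleton_iff_unique_mem]
    constructor
    · exact ⟨⟨⟨hmem 0, hmem 1⟩, hmem 2⟩, hmem 3⟩
    · rintro q ⟨⟨⟨hq0, hq1⟩, hq2⟩, hq3⟩
      rw [ZZ_mem_homSq (hs 0)] at hq0
      rw [ZZ_mem_homSq (hs 1)] at hq1
      rw [ZZ_mem_homSq (hs 2)] at hq2
      have hx0 : x 0 = a - e 0 * s 0 := by have := hline 0; linarith
      have hx1 : x 1 = a - e 1 * s 1 := by have := hline 1; linarith
      have hqa : q.1 = a := by
        have b0 := abs_le.mp hq0.1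
        have b1 := abs_le.mp hq1.1
        have r0 : (p (c 0)).1 = x 0 := rfl
        have r1 : (p (c 1)).1 = x 1 := rfl
        rw [r0] at b0
        rw [r1] at b1
        rcases he1 0 with h | h <;>
          rw [h] at hx0 <;> rw [q0, h] at hx1 <;>
          linarith [b0.1, b0.2, b1.1, b1.2]
      have hqt : q.2 = t := huniq q.2 hq0.2 hq2.2
      exact Prod.ext hqa hqt
  · -- 6 ≤ k : contradiction with weak genericity
    exfalso
    have h2k : (2 : ZMod k) ≠ 0 := by
      intro h
      have h' : ((2:ℕ) : ZMod k) = 0 := by exact_mod_cast h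
      rw [ZMod.natCast_eq_zero_iff] at h'
      have := Nat.le_of_dvd (by norm_num) h'
      omega
    have h4k : (4 : ZMod k) ≠ 0 := by
      intro h
      have h' : ((4:ℕ) : ZMod k) = 0 := by exact_mod_cast h
      rw [ZMod.natCast_eq_zero_iff] at h'
      have := Nat.le_of_dvd (by norm_num) h'
      omega
    have hWGc : ∀ i t : ZMod k, c i ≠ c t → r (c t) = r (c i) → False := by
      intro i t hct hrr
      set σ : Fin n → ℤ := fun y => if y = c t then 1 else if y = c i then -1 else 0 with hσ
      have hσv : ∀ y, σ y = -1 ∨ σ y = 0 ∨ σ y = 1 := by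
        intro y; simp only [hσ]; split_ifs <;> simp
      have hcard : 4 ≤ (Finset.univ.filter fun y => σ y = 0).card := by
        have hsub : Finset.univ.filter (fun y => ¬ σ y = 0) ⊆ {c t, c i} := by
          intro y hy
          simp only [Finset.mem_filter, hσ] at hy
          rcases hy with ⟨-, hy⟩
          by_contra hmem
          simp only [Finset.mem_insert, Finset.mem_singleton] at hmem
          push_neg at hmem
          rw [if_neg hmem.1, if_neg hmem.2] at hy
          exact hy rfl
        have h1 := Finset.card_le_card hsub
        have h2 : ({c t, c i} : Finset (Fin n)).card ≤ 2 :=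
          (Finset.card_insert_le _ _).trans (by simp)
        have h3 := Finset.card_filter_add_card_filter_not
          (s := (Finset.univ : Finset (Fin n))) (p := fun y => σ y = 0)
        have h4 : (Finset.univ : Finset (Fin n)).card = n := by simp
        omega
      have hsum : (∑ y, (σ y : ℝ) * r y) = 0 := by
        have hsupp : ∀ y ∈ (Finset.univ : Finset (Fin n)),
            y ∉ ({c t, c i} : Finset (Fin n)) → (σ y : ℝ) * r y = 0 := by
          intro y _ hy
          simp only [Finset.mem_insert, Finset.mem_singleton] at hy
          push_neg at hy
          simp [hσ, hy.1, hy.2]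
        rw [← Finset.sum_subset (Finset.subset_univ _) hsupp,
          Finset.sum_pair (Ne.symm hct)]
        have e1 : σ (c t) = 1 := by simp [hσ]
        have e2 : σ (c i) = -1 := by simp [hσ, hct]
        rw [e1, e2]
        push_cast
        linarith [hrr]
      have hz := hWG σ hσv hcard hsum
      have : σ (c t) = 0 := by rw [hz]; rfl
      simp [hσ] at this
    by_cases hjump : ∃ i t : ZMod k, e t = -e i ∧
        ((u (i-1) < u t ∧ u t < u (i+1)) ∨ (u (i+1) < u t ∧ u t < u (i-1)))
    · obtain ⟨i, t, het, hbet⟩ := hjump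
      have hti : t ≠ i := by
        intro h
        rw [h] at het
        rcases he1 i with h' | h' <;> rw [h'] at het <;> norm_num at het
      have het1 : e (t-1) = e i := by
        have h' := halt (t-1)
        rw [show t-1+1 = t from by ring] at h'
        linarith
      have het2 : e (t+1) = e i := by
        have h' := halt t
        rw [h', het]; ring
      have hei1 : e (i-1) = e t := by
        have h' := halt (i-1)
        rw [show i-1+1 = i from by ring] at h'
        linarith
      have hei2 : e (i+1) = e t := by
        have h' := halt i
        linarith
      have ht12 : t - 1 ≠ t + 1 := by
        intro h
        apply h2k
        have : (2:ZMod k) = (t+1) - (t-1) := by ring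
        rw [this, ← h]; ring
      have h12 : s (t-1) + s (t+1) ≤ |u (t-1) - u (t+1)| :=
        hsep (t-1) (t+1) ht12 (by rw [het1, het2])
      have hT1 : |u t - u (t-1)| ≤ s t + s (t-1) := by
        have h' := hadj (t-1)
        rw [show t-1+1 = t from by ring] at h'
        rw [abs_sub_comm] at h'
        linarith
      have hT2 : |u t - u (t+1)| ≤ s t + s (t+1) := hadj t
      rcases hbet with ⟨hb1, hb2⟩ | ⟨hb1, hb2⟩
      · -- u (i-1) < u t < u (i+1)
        have hti1 : t ≠ i - 1 := by
          intro h; rw [h] at hb1; exact lt_irrefl _ hb1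
        have hti2 : t ≠ i + 1 := by
          intro h; rw [h] at hb2; exact lt_irrefl _ hb2
        have hit1 : i ≠ t - 1 := by
          intro h; apply hti2; rw [h]; ring
        have hit2 : i ≠ t + 1 := by
          intro h; apply hti1; rw [h]; ring
        have h1A : s i + s (t-1) ≤ |u i - u (t-1)| := hsep i (t-1) hit1 het1.symm
        have h2A : s i + s (t+1) ≤ |u i - u (t+1)| := hsep i (t+1) hit2 het2.symm
        have hPT : u (i-1) + s (i-1) ≤ u t - s t := by
          have h' := hsep (i-1) t (fun h => hti1 h.symm) (by rw [hei1])
          rcases abs_cases (u (i-1) - u t) with ⟨ha, _⟩ | ⟨ha, _⟩ <;>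
            rw [ha] at h' <;> linarith [hs (i-1), hs t]
        have hTQ : u t + s t ≤ u (i+1) - s (i+1) := by
          have h' := hsep t (i+1) hti2 (by rw [hei2])
          rcases abs_cases (u t - u (i+1)) with ⟨ha, _⟩ | ⟨ha, _⟩ <;>
            rw [ha] at h' <;> linarith [hs (i+1), hs t]
        have hAP : |u i - u (i-1)| ≤ s i + s (i-1) := by
          have h' := hadj (i-1)
          rw [show i-1+1 = i from by ring] at h'
          rw [abs_sub_comm] at h'
          linarith
        have hAQ : |u i - u (i+1)| ≤ s i + s (i+1) := hadj i
        have hst : s t = s i :=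
          ZZ_key1d (hs i) (hs (t-1)) (hs (t+1)) hAP hAQ hPT hTQ hT1 hT2 h1A h2A h12
        exact hWGc i t (fun h => hti (hinj h).symm) hst
      · -- u (i+1) < u t < u (i-1)
        have hti1 : t ≠ i + 1 := by
          intro h; rw [h] at hb1; exact lt_irrefl _ hb1
        have hti2 : t ≠ i - 1 := by
          intro h; rw [h] at hb2; exact lt_irrefl _ hb2
        have hit1 : i ≠ t - 1 := by
          intro h; apply hti1; rw [h]; ring
        have hit2 : i ≠ t + 1 := by
          intro h; apply hti2; rw [h]; ring
        have h1A : s i + s (t-1) ≤ |u i - u (t-1)| := hsep i (t-1) hit1 het1.symm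
        have h2A : s i + s (t+1) ≤ |u i - u (t+1)| := hsep i (t+1) hit2 het2.symm
        have hPT : u (i+1) + s (i+1) ≤ u t - s t := by
          have h' := hsep (i+1) t (fun h => hti1 h.symm) (by rw [hei2])
          rcases abs_cases (u (i+1) - u t) with ⟨ha, _⟩ | ⟨ha, _⟩ <;>
            rw [ha] at h' <;> linarith [hs (i+1), hs t]
        have hTQ : u t + s t ≤ u (i-1) - s (i-1) := by
          have h' := hsep t (i-1) hti2 (by rw [hei1])
          rcases abs_cases (u t - u (i-1)) with ⟨ha, _⟩ | ⟨ha, _⟩ <;>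
            rw [ha] at h' <;> linarith [hs (i-1), hs t]
        have hAP : |u i - u (i+1)| ≤ s i + s (i+1) := hadj i
        have hAQ : |u i - u (i-1)| ≤ s i + s (i-1) := by
          have h' := hadj (i-1)
          rw [show i-1+1 = i from by ring] at h'
          rw [abs_sub_comm] at h'
          linarith
        have hst : s t = s i :=
          ZZ_key1d (hs i) (hs (t-1)) (hs (t+1)) hAP hAQ hPT hTQ hT1 hT2 h1A h2A h12
        exact hWGc i t (fun h => hti (hinj h).symm) hst
    · -- no jump: contradiction at the maximum of a parity class
      obtain ⟨M, hMmem, hMmax⟩ :=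
        Finset.exists_max_image (Finset.univ.filter fun j : ZMod k => e j = e 0) u
          ⟨0, by simp⟩
      have hMe : e M = e 0 := (Finset.mem_filter.mp hMmem).2
      have heM2 : e (M+2) = e M := by
        have g1 := halt M
        have g2 := halt (M+1)
        rw [show M+1+1 = M+2 from by ring] at g2
        linarith
      have heM2' : e (M-2) = e M := by
        have g1 := halt (M-2)
        have g2 := halt (M-1)
        rw [show M-2+1 = M-1 from by ring] at g1
        rw [show M-1+1 = M from by ring] at g2
        linarith
      have hM2ne : M + 2 ≠ M := by
        intro h
        apply h2k
        have : (2:ZMod k) = (M+2) - M := by ring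
        rw [this, h]; ring
      have hM2ne' : M - 2 ≠ M := by
        intro h
        apply h2k
        have : (2:ZMod k) = M - (M-2) := by ring
        rw [this, h]; ring
      have hu2 : u (M+2) < u M := by
        have hle := hMmax (M+2) (by simp [heM2, hMe])
        exact lt_of_le_of_ne hle (hne (M+2) M hM2ne (by rw [heM2]))
      have hu2' : u (M-2) < u M := by
        have hle := hMmax (M-2) (by simp [heM2', hMe])
        exact lt_of_le_of_ne hle (hne (M-2) M hM2ne' (by rw [heM2']))
      have hd1 : u (M-2) ≤ u (M+2) := by
        by_contra hlt
        push_neg at hlt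
        apply hjump
        refine ⟨M+1, M-2, ?_, Or.inr ⟨?_, ?_⟩⟩
        · have g := halt M
          rw [heM2', hMe]
          rw [hMe] at g
          linarith
        · rwa [show M+1+1 = M+2 from by ring]
        · rwa [show M+1-1 = M from by ring]
      have hd2 : u (M+2) ≤ u (M-2) := by
        by_contra hlt
        push_neg at hlt
        apply hjump
        refine ⟨M-1, M+2, ?_, Or.inl ⟨?_, ?_⟩⟩
        · have g := halt (M-1)
          rw [show M-1+1 = M from by ring] at g
          rw [heM2, hMe]
          rw [hMe] at g
          linarith
        · rwa [show M-1-1 = M-2 from by ring]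
        · rwa [show M-1+1 = M from by ring]
      have : u (M-2) = u (M+2) := le_antisymm hd1 hd2
      have hMne : M - 2 ≠ M + 2 := by
        intro h
        apply h4k
        have : (4:ZMod k) = (M+2) - (M-2) := by ring
        rw [this, ← h]; ring
      exact hne (M-2) (M+2) hMne (by rw [heM2', heM2]) this
end
end

section
/- Let r_1, …, r_n be positive real numbers with n ≥ 2, and suppose there exists a homothetic packing of n squares with radii r_1, …, r_n and k contacts. Then for any r_{n+1} > 0 there exists a homothetic packing of n + 1 squares with radii r_1, …, r_{n+1} and at least k + 2 contacts. -/
open Finset Real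

noncomputable section

/-- Numeric "interiors overlap" predicate. -/
def Ov (r₁ : ℝ) (c₁ : ℝ × ℝ) (r₂ : ℝ) (c₂ : ℝ × ℝ) : Prop :=
  |c₁.1 - c₂.1| < r₁ + r₂ ∧ |c₁.2 - c₂.2| < r₁ + r₂

/-- Numeric "squares touch" predicate. -/
def Tc (r₁ : ℝ) (c₁ : ℝ × ℝ) (r₂ : ℝ) (c₂ : ℝ × ℝ) : Prop :=
  |c₁.1 - c₂.1| ≤ r₁ + r₂ ∧ |c₁.2 - c₂.2| ≤ r₁ + r₂

lemma homSq_eq_s13 {r : ℝ} (hr : 0 < r) (c : ℝ × ℝ) :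
    homSq r c = Set.Icc (c.1 - r) (c.1 + r) ×ˢ Set.Icc (c.2 - r) (c.2 + r) := by
  ext z
  constructor
  · rintro ⟨q, ⟨h1, h2, h3, h4⟩, rfl⟩
    simp only [Set.mem_prod, Set.mem_Icc, Prod.smul_fst, Prod.smul_snd, Prod.fst_add,
      Prod.snd_add, smul_eq_mul]
    constructor <;> constructor <;> nlinarith
  · rintro ⟨⟨h1, h2⟩, h3, h4⟩
    refine ⟨⟨(z.1 - c.1) / r, (z.2 - c.2) / r⟩, ⟨?_, ?_, ?_, ?_⟩, ?_⟩
    · rw [le_div_iff₀ hr]; linarith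
    · rw [div_le_iff₀ hr]; linarith
    · rw [le_div_iff₀ hr]; linarith
    · rw [div_le_iff₀ hr]; linarith
    · ext <;> simp <;> field_simp <;> ring

lemma interior_homSq_s13 {r : ℝ} (hr : 0 < r) (c : ℝ × ℝ) :
    interior (homSq r c) = Set.Ioo (c.1 - r) (c.1 + r) ×ˢ Set.Ioo (c.2 - r) (c.2 + r) := by
  rw [homSq_eq_s13 hr, interior_prod_eq, interior_Icc, interior_Icc]

lemma inter_nonempty_iff {r₁ r₂ : ℝ} (h₁ : 0 < r₁) (h₂ : 0 < r₂) (c₁ c₂ : ℝ × ℝ) :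
    (homSq r₁ c₁ ∩ homSq r₂ c₂).Nonempty ↔ Tc r₁ c₁ r₂ c₂ := by
  rw [homSq_eq_s13 h₁, homSq_eq_s13 h₂]
  constructor
  · rintro ⟨z, ⟨⟨a1, a2⟩, a3, a4⟩, ⟨b1, b2⟩, b3, b4⟩
    constructor <;> rw [abs_sub_le_iff] <;> constructor <;> linarith
  · rintro ⟨hx, hy⟩
    rw [abs_sub_le_iff] at hx hy
    refine ⟨⟨max (c₁.1 - r₁) (c₂.1 - r₂), max (c₁.2 - r₁) (c₂.2 - r₂)⟩,
      ⟨⟨le_max_left _ _, ?_⟩, le_max_left _ _, ?_⟩,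
      ⟨le_max_right _ _, ?_⟩, le_max_right _ _, ?_⟩ <;>
    · apply max_le <;> linarith [hx.1, hx.2, hy.1, hy.2]

lemma interior_disjoint_iff {r₁ r₂ : ℝ} (h₁ : 0 < r₁) (h₂ : 0 < r₂) (c₁ c₂ : ℝ × ℝ) :
    interior (homSq r₁ c₁) ∩ interior (homSq r₂ c₂) = ∅ ↔ ¬ Ov r₁ c₁ r₂ c₂ := by
  rw [interior_homSq_s13 h₁, interior_homSq_s13 h₂]
  constructor
  · intro h hov
    obtain ⟨hx, hy⟩ := hov
    rw [abs_sub_lt_iff] at hx hy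
    set x := (max (c₁.1 - r₁) (c₂.1 - r₂) + min (c₁.1 + r₁) (c₂.1 + r₂)) / 2 with hxdef
    set y := (max (c₁.2 - r₁) (c₂.2 - r₂) + min (c₁.2 + r₁) (c₂.2 + r₂)) / 2 with hydef
    have hx1 : max (c₁.1 - r₁) (c₂.1 - r₂) < min (c₁.1 + r₁) (c₂.1 + r₂) := by
      apply max_lt <;> apply lt_min <;> linarith [hx.1, hx.2]
    have hy1 : max (c₁.2 - r₁) (c₂.2 - r₂) < min (c₁.2 + r₁) (c₂.2 + r₂) := by
      apply max_lt <;> apply lt_min <;> linarith [hy.1, hy.2]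
    have e1x : c₁.1 - r₁ ≤ max (c₁.1 - r₁) (c₂.1 - r₂) := le_max_left _ _
    have e2x : c₂.1 - r₂ ≤ max (c₁.1 - r₁) (c₂.1 - r₂) := le_max_right _ _
    have f1x : min (c₁.1 + r₁) (c₂.1 + r₂) ≤ c₁.1 + r₁ := min_le_left _ _
    have f2x : min (c₁.1 + r₁) (c₂.1 + r₂) ≤ c₂.1 + r₂ := min_le_right _ _
    have e1y : c₁.2 - r₁ ≤ max (c₁.2 - r₁) (c₂.2 - r₂) := le_max_left _ _
    have e2y : c₂.2 - r₂ ≤ max (c₁.2 - r₁) (c₂.2 - r₂) := le_max_right _ _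
    have f1y : min (c₁.2 + r₁) (c₂.2 + r₂) ≤ c₁.2 + r₁ := min_le_left _ _
    have f2y : min (c₁.2 + r₁) (c₂.2 + r₂) ≤ c₂.2 + r₂ := min_le_right _ _
    have : (⟨x, y⟩ : ℝ × ℝ) ∈ (Set.Ioo (c₁.1 - r₁) (c₁.1 + r₁) ×ˢ Set.Ioo (c₁.2 - r₁) (c₁.2 + r₁)) ∩
        (Set.Ioo (c₂.1 - r₂) (c₂.1 + r₂) ×ˢ Set.Ioo (c₂.2 - r₂) (c₂.2 + r₂)) := by
      refine ⟨⟨⟨?_, ?_⟩, ?_, ?_⟩, ⟨?_, ?_⟩, ?_, ?_⟩ <;> simp only [hxdef, hydef] <;> linarith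
    rw [h] at this; exact this
  · intro h
    rw [Set.eq_empty_iff_forall_notMem]
    rintro ⟨zx, zy⟩ ⟨⟨a1, a2⟩, b1, b2⟩
    simp only [Set.mem_Ioo] at a1 a2 b1 b2
    exact h ⟨by rw [abs_sub_lt_iff]; constructor <;> linarith [a1.1, a1.2, b1.1, b1.2],
      by rw [abs_sub_lt_iff]; constructor <;> linarith [a2.1, a2.2, b2.1, b2.2]⟩

lemma slide {n : ℕ} (R : Fin n → ℝ) (p : Fin n → ℝ × ℝ) (r' : ℝ)
    (c : ℝ → ℝ × ℝ)
    (hLip : ∀ s t : ℝ, |(c s).1 - (c t).1| ≤ |s - t| ∧ |(c s).2 - (c t).2| ≤ |s - t|)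
    (s₀ s₁ : ℝ)
    (hstart : ∀ m, ¬ Ov r' (c s₀) (R m) (p m))
    (hbad : ∃ s ∈ Set.Icc s₀ s₁, ∃ m, Ov r' (c s) (R m) (p m)) :
    ∃ T ∈ Set.Icc s₀ s₁, (∀ m, ¬ Ov r' (c T) (R m) (p m)) ∧
      ∃ m, Tc r' (c T) (R m) (p m) ∧ ∃ s ∈ Set.Icc s₀ s₁, Ov r' (c s) (R m) (p m) := by
  classical
  set I : Fin n → Set ℝ := fun m => {s | s ∈ Set.Icc s₀ s₁ ∧ Ov r' (c s) (R m) (p m)} with hI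
  obtain ⟨s2, hs2, m2, hm2⟩ := hbad
  set E : Finset (Fin n) := univ.filter fun m => (I m).Nonempty with hEdef
  have hE : E.Nonempty := ⟨m2, by
    simp only [hEdef, mem_filter, mem_univ, true_and]
    exact ⟨s2, hs2, hm2⟩⟩
  obtain ⟨m₀, hm₀E, hmin⟩ := E.exists_min_image (fun m => sInf (I m)) hE
  have hne₀ : (I m₀).Nonempty := (mem_filter.1 hm₀E).2
  have hbb : ∀ m, BddBelow (I m) := fun m => ⟨s₀, fun s hs => hs.1.1⟩
  set T := sInf (I m₀) with hTdef
  have hT0 : s₀ ≤ T := le_csInf hne₀ (fun s hs => hs.1.1)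
  have hT1 : T ≤ s₁ := by
    obtain ⟨s, hs⟩ := hne₀
    exact (csInf_le (hbb m₀) hs).trans hs.1.2
  have hlb : ∀ m, ∀ s ∈ I m, T ≤ s := by
    intro m s hs
    have hmE : m ∈ E := by
      simp only [hEdef, mem_filter, mem_univ, true_and]; exact ⟨s, hs⟩
    exact (hmin m hmE).trans (csInf_le (hbb m) hs)
  refine ⟨T, ⟨hT0, hT1⟩, ?_, m₀, ?_, ?_⟩
  · -- validity at T
    intro m hov
    rcases eq_or_lt_of_le hT0 with heq | hlt
    · exact hstart m (heq ▸ hov)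
    · obtain ⟨h1, h2⟩ := hov
      set δ := min (r' + R m - |(c T).1 - (p m).1|) (r' + R m - |(c T).2 - (p m).2|) with hδ
      have hδpos : 0 < δ := lt_min (by linarith) (by linarith)
      set s := max s₀ (T - δ / 2) with hsdef
      have hsT : s < T := max_lt hlt (by linarith)
      have hdist : |s - T| < δ := by
        rw [abs_sub_lt_iff]
        constructor
        · linarith
        · have : T - δ / 2 ≤ s := le_max_right _ _
          linarith
      have hsI : s ∈ I m := by
        refine ⟨⟨le_max_left _ _, hsT.le.trans hT1⟩, ?_, ?_⟩
        · calc |(c s).1 - (p m).1| ≤ |(c s).1 - (c T).1| + |(c T).1 - (p m).1| := by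
                have := abs_sub_abs_le_abs_sub ((c s).1 - (p m).1) ((c T).1 - (p m).1)
                have h := abs_sub ((c s).1 - (p m).1) ((c T).1 - (p m).1)
                calc |(c s).1 - (p m).1| = |((c s).1 - (c T).1) + ((c T).1 - (p m).1)| := by
                      ring_nf
                  _ ≤ _ := abs_add_le _ _
          _ < r' + R m := by
                have := (hLip s T).1
                have hd : |(c s).1 - (c T).1| < δ := lt_of_le_of_lt this hdist
                have : δ ≤ r' + R m - |(c T).1 - (p m).1| := min_le_left _ _
                linarith
        · calc |(c s).2 - (p m).2| ≤ |(c s).2 - (c T).2| + |(c T).2 - (p m).2| := by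
                calc |(c s).2 - (p m).2| = |((c s).2 - (c T).2) + ((c T).2 - (p m).2)| := by
                      ring_nf
                  _ ≤ _ := abs_add_le _ _
          _ < r' + R m := by
                have := (hLip s T).2
                have hd : |(c s).2 - (c T).2| < δ := lt_of_le_of_lt this hdist
                have : δ ≤ r' + R m - |(c T).2 - (p m).2| := min_le_right _ _
                linarith
      exact absurd (hlb m s hsI) (not_le.2 hsT)
  · -- touch m₀ at T
    have key : ∀ ε > (0:ℝ), |(c T).1 - (p m₀).1| ≤ r' + R m₀ + ε ∧
        |(c T).2 - (p m₀).2| ≤ r' + R m₀ + ε := by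
      intro ε hε
      obtain ⟨s, hsI, hslt⟩ := Real.lt_sInf_add_pos hne₀ hε
      have hsge : T ≤ s := hlb m₀ s hsI
      have hdist : |(c T).1 - (c s).1| ≤ |T - s| := (hLip T s).1
      have hdist2 : |(c T).2 - (c s).2| ≤ |T - s| := (hLip T s).2
      have habs : |T - s| < ε := by rw [abs_sub_lt_iff]; constructor <;> linarith
      obtain ⟨o1, o2⟩ := hsI.2
      constructor
      · calc |(c T).1 - (p m₀).1| = |((c T).1 - (c s).1) + ((c s).1 - (p m₀).1)| := by ring_nf
          _ ≤ |(c T).1 - (c s).1| + |(c s).1 - (p m₀).1| := abs_add_le _ _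
          _ ≤ r' + R m₀ + ε := by linarith
      · calc |(c T).2 - (p m₀).2| = |((c T).2 - (c s).2) + ((c s).2 - (p m₀).2)| := by ring_nf
          _ ≤ |(c T).2 - (c s).2| + |(c s).2 - (p m₀).2| := abs_add_le _ _
          _ ≤ r' + R m₀ + ε := by linarith
    constructor
    · refine le_of_forall_pos_le_add fun ε hε => (key ε hε).1
    · refine le_of_forall_pos_le_add fun ε hε => (key ε hε).2
  · exact hne₀.imp fun s hs => ⟨hs.1, hs.2⟩

lemma slide_apply {n : ℕ} (R : Fin n → ℝ) (p : Fin n → ℝ × ℝ) (r' : ℝ) (i : Fin n)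
    (c : ℝ → ℝ × ℝ)
    (hLip : ∀ s t : ℝ, |(c s).1 - (c t).1| ≤ |s - t| ∧ |(c s).2 - (c t).2| ≤ |s - t|)
    (s₀ s₁ : ℝ)
    (hstart : ∀ m, ¬ Ov r' (c s₀) (R m) (p m))
    (hITc : ∀ s ∈ Set.Icc s₀ s₁, Tc r' (c s) (R i) (p i))
    (hINoOv : ∀ s ∈ Set.Icc s₀ s₁, ¬ Ov r' (c s) (R i) (p i))
    (hbad : ∃ s ∈ Set.Icc s₀ s₁, ∃ m, Ov r' (c s) (R m) (p m)) :
    ∃ cc : ℝ × ℝ, ∃ m, m ≠ i ∧ (∀ a, ¬ Ov r' cc (R a) (p a)) ∧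
      Tc r' cc (R i) (p i) ∧ Tc r' cc (R m) (p m) := by
  obtain ⟨T, hT, hvalid, m, hTc, s, hs, hOv⟩ := slide R p r' c hLip s₀ s₁ hstart hbad
  exact ⟨c T, m, fun h => hINoOv s hs (h ▸ hOv), hvalid, hITc T hT, hTc⟩

lemma main_geom {n : ℕ} (hn : 2 ≤ n) (R : Fin n → ℝ) (hR : ∀ m, 0 < R m)
    (r' : ℝ) (hr' : 0 < r') (p : Fin n → ℝ × ℝ)
    (hP : ∀ a b, a ≠ b → ¬ Ov (R a) (p a) (R b) (p b)) :
    ∃ pt : Fin n → ℝ × ℝ,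
      (∀ a b, a ≠ b → ¬ Ov (R a) (pt a) (R b) (pt b)) ∧
      (∀ a b, a ≠ b → Tc (R a) (p a) (R b) (p b) → Tc (R a) (pt a) (R b) (pt b)) ∧
      ∃ c : ℝ × ℝ, ∃ i m : Fin n, i ≠ m ∧
        (∀ a, ¬ Ov r' c (R a) (pt a)) ∧ Tc r' c (R i) (pt i) ∧ Tc r' c (R m) (pt m) := by
  classical
  have hpos : 0 < n := by omega
  obtain ⟨i, -, hground⟩ := Finset.exists_min_image Finset.univ
    (fun m => (p m).2 - R m) ⟨⟨0, hpos⟩, mem_univ _⟩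
  simp only [mem_univ, forall_true_left] at hground
  set xi := (p i).1 with hxi
  set yi := (p i).2 with hyi
  set b := yi - R i with hb
  set l := xi - R i with hl
  set Rt := xi + R i with hRt
  set t := yi + R i with ht
  have hRi := hR i
  have hbt : b - r' ≤ t + r' := by simp only [hb, ht]; linarith
  have hlR : l - r' ≤ Rt + r' := by simp only [hl, hRt]; linarith
  have habs1 : |l - r' - xi| = r' + R i := by
    have h : l - r' - xi = -(r' + R i) := by simp only [hl]; ring
    rw [h, abs_neg, abs_of_nonneg (by linarith)]
  have habs2 : |Rt + r' - xi| = r' + R i := by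
    have h : Rt + r' - xi = r' + R i := by simp only [hRt]; ring
    rw [h, abs_of_nonneg (by linarith)]
  have habs3 : |t + r' - yi| = r' + R i := by
    have h : t + r' - yi = r' + R i := by simp only [ht]; ring
    rw [h, abs_of_nonneg (by linarith)]
  -- common start validity for the two vertical slides
  have hstartV : ∀ (a : ℝ) (m : Fin n), ¬ Ov r' ((a, b - r') : ℝ × ℝ) (R m) (p m) := by
    intro a m hov
    have h2 := hov.2
    have hg := hground m
    have : r' + R m ≤ |((a, b - r') : ℝ × ℝ).2 - (p m).2| := by
      rw [abs_sub_comm]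
      calc r' + R m ≤ (p m).2 - (b - r') := by simp only [hb] at *; linarith
        _ ≤ |(p m).2 - (b - r')| := le_abs_self _
    linarith
  -- vertical slide touch/no-overlap with i
  have hVTc : ∀ (a : ℝ), |a - xi| = r' + R i →
      ∀ s ∈ Set.Icc (b - r') (t + r'), Tc r' ((a, s) : ℝ × ℝ) (R i) (p i) := by
    intro a ha s hs
    refine ⟨le_of_eq ha, ?_⟩
    rw [abs_sub_le_iff]
    obtain ⟨h1, h2⟩ := hs
    constructor
    · simp only [ht] at h2 ⊢; linarith
    · simp only [hb] at h1 ⊢; linarith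
  have hVNoOv : ∀ (a : ℝ), |a - xi| = r' + R i →
      ∀ s ∈ Set.Icc (b - r') (t + r'), ¬ Ov r' ((a, s) : ℝ × ℝ) (R i) (p i) := by
    intro a ha s _ hov
    have := hov.1
    simp only [← hxi] at this
    rw [ha] at this
    linarith
  -- horizontal slide touch/no-overlap with i
  have hHTc : ∀ s ∈ Set.Icc (l - r') (Rt + r'), Tc r' ((s, t + r') : ℝ × ℝ) (R i) (p i) := by
    intro s hs
    refine ⟨?_, le_of_eq habs3⟩
    rw [abs_sub_le_iff]
    obtain ⟨h1, h2⟩ := hs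
    constructor
    · simp only [hRt] at h2 ⊢; linarith
    · simp only [hl] at h1 ⊢; linarith
  have hHNoOv : ∀ s ∈ Set.Icc (l - r') (Rt + r'), ¬ Ov r' ((s, t + r') : ℝ × ℝ) (R i) (p i) := by
    intro s _ hov
    have := hov.2
    simp only [← hyi] at this
    rw [habs3] at this
    linarith
  by_cases hbad1 : ∃ s ∈ Set.Icc (b - r') (t + r'), ∃ m, Ov r' ((l - r', s) : ℝ × ℝ) (R m) (p m)
  · obtain ⟨cc, m, hmi, hvalid, hTci, hTcm⟩ := slide_apply R p r' i (fun s => (l - r', s))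
      (by intro s u; constructor <;> simp) (b - r') (t + r')
      (hstartV _) (hVTc _ habs1) (hVNoOv _ habs1) hbad1
    exact ⟨p, hP, fun a b _ h => h, cc, i, m, hmi.symm, hvalid, hTci, hTcm⟩
  by_cases hbad2 : ∃ s ∈ Set.Icc (b - r') (t + r'), ∃ m, Ov r' ((Rt + r', s) : ℝ × ℝ) (R m) (p m)
  · obtain ⟨cc, m, hmi, hvalid, hTci, hTcm⟩ := slide_apply R p r' i (fun s => (Rt + r', s))
      (by intro s u; constructor <;> simp) (b - r') (t + r')
      (hstartV _) (hVTc _ habs2) (hVNoOv _ habs2) hbad2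
    exact ⟨p, hP, fun a b _ h => h, cc, i, m, hmi.symm, hvalid, hTci, hTcm⟩
  by_cases hbad3 : ∃ s ∈ Set.Icc (l - r') (Rt + r'), ∃ m, Ov r' ((s, t + r') : ℝ × ℝ) (R m) (p m)
  · have hstart3 : ∀ m, ¬ Ov r' ((l - r', t + r') : ℝ × ℝ) (R m) (p m) := by
      intro m hov
      exact hbad1 ⟨t + r', ⟨hbt, le_refl _⟩, m, hov⟩
    obtain ⟨cc, m, hmi, hvalid, hTci, hTcm⟩ := slide_apply R p r' i (fun s => (s, t + r'))
      (by intro s u; constructor <;> simp) (l - r') (Rt + r')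
      hstart3 hHTc hHNoOv hbad3
    exact ⟨p, hP, fun a b _ h => h, cc, i, m, hmi.symm, hvalid, hTci, hTcm⟩
  -- isolated case: i touches nobody
  · have hiso : ∀ j, j ≠ i → ¬ Tc (R i) (p i) (R j) (p j) := by
      intro j hji hTc
      have hnov := hP i j (Ne.symm hji)
      obtain ⟨htx, hty⟩ := hTc
      have heq : |(p i).1 - (p j).1| = R i + R j ∨ |(p i).2 - (p j).2| = R i + R j := by
        by_contra hcon
        push_neg at hcon
        exact hnov ⟨lt_of_le_of_ne htx hcon.1, lt_of_le_of_ne hty hcon.2⟩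
      have hRj := hR j
      have hyb : b + R j ≤ (p j).2 := by
        have := hground j; simp only [hb] at *; linarith
      rcases heq with hx | hy
      · -- x-direction contact
        have hyt : (p j).2 ≤ t + R j := by
          rw [abs_sub_le_iff] at hty
          simp only [ht, ← hyi]; linarith [hty.2]
        have hs2 : ∀ a : ℝ, |a - (p j).2| < r' + R j →
            False → True := fun _ _ _ => trivial
        -- the vertical coordinate of the bad point
        set s : ℝ := max (b - r') (min (t + r') (p j).2) with hsdef
        have hsmem : s ∈ Set.Icc (b - r') (t + r') :=
          ⟨le_max_left _ _, max_le hbt (min_le_left _ _)⟩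
        have hsnear : |s - (p j).2| < r' + R j := by
          rcases le_or_gt (p j).2 (t + r') with hc | hc
          · have hmax : s = (p j).2 := by
              rw [hsdef, min_eq_right hc]; exact max_eq_right (by linarith)
            rw [hmax, sub_self, abs_zero]; positivity
          · have hmax : s = t + r' := by
              rw [hsdef, min_eq_left hc.le]; exact max_eq_right hbt
            rw [hmax, abs_sub_lt_iff]; constructor <;> linarith
        rcases abs_eq (by linarith : (0:ℝ) ≤ R i + R j) |>.mp hx with hxr | hxl
        · -- j to the left : bad point on slide 1
          apply hbad1
          refine ⟨s, hsmem, j, ?_, hsnear⟩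
          show |l - r' - (p j).1| < r' + R j
          have hpj : (p j).1 = xi - (R i + R j) := by linarith
          rw [hpj]
          have : l - r' - (xi - (R i + R j)) = R j - r' := by simp only [hl]; ring
          rw [this, abs_sub_lt_iff]; constructor <;> linarith
        · -- j to the right : bad point on slide 2
          apply hbad2
          refine ⟨s, hsmem, j, ?_, hsnear⟩
          show |Rt + r' - (p j).1| < r' + R j
          have hpj : (p j).1 = xi + (R i + R j) := by linarith
          rw [hpj]
          have : Rt + r' - (xi + (R i + R j)) = r' - R j := by simp only [hRt]; ring
          rw [this, abs_sub_lt_iff]; constructor <;> linarith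
      · -- y-direction contact: j is above
        have hyj : (p j).2 = yi + (R i + R j) := by
          rcases abs_eq (by linarith : (0:ℝ) ≤ R i + R j) |>.mp hy with h1 | h1
          · exfalso
            simp only [← hyi] at h1
            simp only [hb] at hyb
            linarith
          · simp only [← hyi] at h1; linarith
        have hxb : l - R j ≤ (p j).1 := by
          rw [abs_sub_le_iff] at htx
          simp only [hl, ← hxi]; linarith [htx.1]
        have hxt : (p j).1 ≤ Rt + R j := by
          rw [abs_sub_le_iff] at htx
          simp only [hRt, ← hxi]; linarith [htx.2]
        apply hbad3
        set s : ℝ := max (l - r') (min (Rt + r') (p j).1) with hsdef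
        have hsmem : s ∈ Set.Icc (l - r') (Rt + r') :=
          ⟨le_max_left _ _, max_le hlR (min_le_left _ _)⟩
        refine ⟨s, hsmem, j, ?_, ?_⟩
        · show |s - (p j).1| < r' + R j
          rcases le_or_gt (p j).1 (Rt + r') with hc | hc
          · rcases le_or_gt (l - r') (p j).1 with hd | hd
            · have hmax : s = (p j).1 := by
                rw [hsdef, min_eq_right hc]; exact max_eq_right hd
              rw [hmax, sub_self, abs_zero]; positivity
            · have hmax : s = l - r' := by
                rw [hsdef, min_eq_right hc]; exact max_eq_left hd.le
              rw [hmax, abs_sub_lt_iff]; constructor <;> linarith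
          · have hmax : s = Rt + r' := by
              rw [hsdef, min_eq_left hc.le]; exact max_eq_right hlR
            rw [hmax, abs_sub_lt_iff]; constructor <;> linarith
        · show |t + r' - (p j).2| < r' + R j
          rw [hyj]
          have : t + r' - (yi + (R i + R j)) = r' - R j := by simp only [ht]; ring
          rw [this, abs_sub_lt_iff]; constructor <;> linarith
    -- explicit re-stacking construction
    have hovsymm : ∀ (r1 r2 : ℝ) (c1 c2 : ℝ × ℝ), Ov r1 c1 r2 c2 → Ov r2 c2 r1 c1 := by
      intro r1 r2 c1 c2 ⟨h1, h2⟩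
      exact ⟨by rw [abs_sub_comm, add_comm]; exact h1, by rw [abs_sub_comm, add_comm]; exact h2⟩
    have htcsymm : ∀ (r1 r2 : ℝ) (c1 c2 : ℝ × ℝ), Tc r1 c1 r2 c2 → Tc r2 c2 r1 c1 := by
      intro r1 r2 c1 c2 ⟨h1, h2⟩
      exact ⟨by rw [abs_sub_comm, add_comm]; exact h1, by rw [abs_sub_comm, add_comm]; exact h2⟩
    have : Nontrivial (Fin n) := Fin.nontrivial_iff_two_le.mpr hn
    obtain ⟨j0, hj0⟩ := exists_ne i
    obtain ⟨i₂, hi₂mem, hmin₂⟩ := Finset.exists_min_image (Finset.univ.erase i)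
      (fun m => (p m).2 - R m) ⟨j0, Finset.mem_erase.2 ⟨hj0, mem_univ _⟩⟩
    have hi₂ne : i₂ ≠ i := (Finset.mem_erase.1 hi₂mem).1
    set x₂ := (p i₂).1 with hx₂
    set y₂ := (p i₂).2 with hy₂
    set b₂ := y₂ - R i₂ with hb₂
    have hR₂ := hR i₂
    have hground₂ : ∀ m, m ≠ i → b₂ ≤ (p m).2 - R m := by
      intro m hm
      exact hmin₂ m (Finset.mem_erase.2 ⟨hm, mem_univ _⟩)
    set pt := Function.update p i ((x₂ - R i, b₂ - R i) : ℝ × ℝ) with hptdef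
    have hpti : pt i = (x₂ - R i, b₂ - R i) := Function.update_self _ _ _
    have hptne : ∀ a, a ≠ i → pt a = p a := fun a ha => Function.update_of_ne ha _ _
    set c : ℝ × ℝ := (x₂ + r', b₂ - r') with hcdef
    -- i's new position overlaps nobody
    have hinoov : ∀ a, a ≠ i → ¬ Ov (R i) (pt i) (R a) (p a) := by
      intro a ha hov
      have h2 := hov.2
      rw [hpti] at h2
      have hga := hground₂ a ha
      have : R i + R a ≤ |((x₂ - R i, b₂ - R i) : ℝ × ℝ).2 - (p a).2| := by
        rw [abs_sub_comm]
        calc R i + R a ≤ (p a).2 - (b₂ - R i) := by linarith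
          _ ≤ |(p a).2 - (b₂ - R i)| := le_abs_self _
      exact absurd h2 (not_lt.2 this)
    refine ⟨pt, ?_, ?_, c, i, i₂, Ne.symm hi₂ne, ?_, ?_, ?_⟩
    · -- packing
      intro a a2 hab
      rcases eq_or_ne a i with hai | ha
      · subst hai
        rw [hptne a2 (Ne.symm hab)]
        exact hinoov a2 (Ne.symm hab)
      · rcases eq_or_ne a2 i with hai2 | hb
        · subst hai2
          rw [hptne a ha]
          intro hov
          exact hinoov a ha (hovsymm _ _ _ _ hov)
        · rw [hptne a ha, hptne a2 hb]
          exact hP a a2 hab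
    · -- preservation of contacts
      intro a a2 hab hTcab
      rcases eq_or_ne a i with hai | ha
      · subst hai
        exact absurd hTcab (hiso a2 (Ne.symm hab))
      · rcases eq_or_ne a2 i with hai2 | hb
        · subst hai2
          exact absurd (htcsymm _ _ _ _ hTcab) (hiso a ha)
        · rw [hptne a ha, hptne a2 hb]; exact hTcab
    · -- validity of c
      intro a
      rcases eq_or_ne a i with hai | ha
      · rw [hai, hpti]
        intro hov
        have h1 := hov.1
        have : ((x₂ + r' , b₂ - r') : ℝ × ℝ).1 - ((x₂ - R i, b₂ - R i) : ℝ × ℝ).1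
            = r' + R i := by simp only []; ring
        rw [show c = ((x₂ + r' , b₂ - r') : ℝ × ℝ) from rfl] at h1
        rw [this, abs_of_nonneg (by linarith)] at h1
        exact absurd h1 (lt_irrefl _)
      · rw [hptne a ha]
        intro hov
        have h2 := hov.2
        have hga := hground₂ a ha
        have : r' + R a ≤ |c.2 - (p a).2| := by
          rw [abs_sub_comm]
          have hc2 : c.2 = b₂ - r' := rfl
          rw [hc2]
          calc r' + R a ≤ (p a).2 - (b₂ - r') := by linarith
            _ ≤ |(p a).2 - (b₂ - r')| := le_abs_self _
        exact absurd h2 (not_lt.2 this)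
    · -- touches i
      rw [hpti]
      constructor
      · show |(x₂ + r') - (x₂ - R i)| ≤ r' + R i
        rw [show (x₂ + r') - (x₂ - R i) = r' + R i by ring, abs_of_nonneg (by linarith)]
      · show |(b₂ - r') - (b₂ - R i)| ≤ r' + R i
        rw [show (b₂ - r') - (b₂ - R i) = R i - r' by ring, abs_sub_le_iff]
        constructor <;> linarith
    · -- touches i₂
      rw [hptne i₂ hi₂ne]
      constructor
      · show |(x₂ + r') - (p i₂).1| ≤ r' + R i₂
        rw [show (x₂ + r') - (p i₂).1 = r' by rw [← hx₂]; ring, abs_of_nonneg (by linarith)]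
        linarith
      · show |(b₂ - r') - (p i₂).2| ≤ r' + R i₂
        rw [show (b₂ - r') - (p i₂).2 = -(r' + R i₂) by rw [← hy₂]; simp only [hb₂]; ring,
          abs_neg, abs_of_nonneg (by linarith)]

lemma ov_symm {r₁ r₂ : ℝ} {c₁ c₂ : ℝ × ℝ} (h : Ov r₁ c₁ r₂ c₂) : Ov r₂ c₂ r₁ c₁ :=
  ⟨by rw [abs_sub_comm, add_comm]; exact h.1, by rw [abs_sub_comm, add_comm]; exact h.2⟩

/-- **Lemma 4.1.** If for radii `r_1, …, r_n` (`n ≥ 2`) there is a homothetic packing of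
`n` squares with `k` contacts, then for any additional radius `r_{n+1} > 0` there is a
homothetic packing of `n + 1` squares with radii `r_1, …, r_{n+1}` and at least `k + 2`
contacts. -/
theorem add_square_gain_two_contacts (n : ℕ) (hn : 2 ≤ n) (k : ℕ)
    (r : Fin (n + 1) → ℝ) (hr : ∀ i, 0 < r i)
    (p : Fin n → ℝ × ℝ) (hP : IsSqPacking (fun i : Fin n => r i.castSucc) p)
    (hk : (contactGraph (fun i : Fin n => r i.castSucc) p).edgeSet.ncard = k) :
    ∃ q : Fin (n + 1) → ℝ × ℝ, IsSqPacking r q ∧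
      k + 2 ≤ (contactGraph r q).edgeSet.ncard := by
  classical
  set R : Fin n → ℝ := fun i => r i.castSucc with hRdef
  have hR : ∀ m, 0 < R m := fun m => hr _
  set r' : ℝ := r (Fin.last n) with hr'def
  have hr' : 0 < r' := hr _
  have hPnum : ∀ a b, a ≠ b → ¬ Ov (R a) (p a) (R b) (p b) := by
    intro a b hab
    exact (interior_disjoint_iff (hR a) (hR b) _ _).1 (hP.2 a b hab)
  obtain ⟨pt, hpack, hpres, c, i, m, him, hvalid, hTci, hTcm⟩ :=
    main_geom hn R hR r' hr' p hPnum
  set q : Fin (n + 1) → ℝ × ℝ := Fin.snoc pt c with hqdef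
  have hqc : ∀ a : Fin n, q a.castSucc = pt a := fun a => Fin.snoc_castSucc _ _ _
  have hql : q (Fin.last n) = c := Fin.snoc_last _ _
  have hpackq : IsSqPacking r q := by
    refine ⟨hr, ?_⟩
    intro a b hab
    induction a using Fin.lastCases with
    | last =>
      induction b using Fin.lastCases with
      | last => exact absurd rfl hab
      | cast b =>
        rw [hql, hqc]
        exact (interior_disjoint_iff hr' (hR b) _ _).2 (hvalid b)
    | cast a =>
      induction b using Fin.lastCases with
      | last =>
        rw [hql, hqc]
        exact (interior_disjoint_iff (hR a) hr' _ _).2 (fun h => hvalid a (ov_symm h))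
      | cast b =>
        rw [hqc, hqc]
        exact (interior_disjoint_iff (hR a) (hR b) _ _).2
          (hpack a b (fun h => hab (congrArg Fin.castSucc h)))
  refine ⟨q, hpackq, ?_⟩
  -- edge counting
  set G := contactGraph R p with hGdef
  set H := contactGraph r q with hHdef
  have hcastne : ∀ a : Fin n, a.castSucc ≠ Fin.last n :=
    fun a => ne_of_lt (Fin.castSucc_lt_last a)
  have hAdj : ∀ a b : Fin n, G.Adj a b → H.Adj a.castSucc b.castSucc := by
    intro a b hab
    obtain ⟨hne, hinter⟩ : SqContact R p a b := hab
    have hTab : Tc (R a) (p a) (R b) (p b) := (inter_nonempty_iff (hR a) (hR b) _ _).1 hinter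
    refine ⟨fun h => hne (Fin.castSucc_injective n h), ?_⟩
    rw [show r a.castSucc = R a from rfl, show r b.castSucc = R b from rfl, hqc, hqc]
    exact (inter_nonempty_iff (hR a) (hR b) _ _).2 (hpres a b hne hTab)
  have hAdji : H.Adj (Fin.last n) i.castSucc := by
    show SqContact r q (Fin.last n) i.castSucc
    refine ⟨(hcastne i).symm, ?_⟩
    rw [hql, hqc, show r (Fin.last n) = r' from rfl, show r i.castSucc = R i from rfl]
    exact (inter_nonempty_iff hr' (hR i) _ _).2 hTci
  have hAdjm : H.Adj (Fin.last n) m.castSucc := by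
    show SqContact r q (Fin.last n) m.castSucc
    refine ⟨(hcastne m).symm, ?_⟩
    rw [hql, hqc, show r (Fin.last n) = r' from rfl, show r m.castSucc = R m from rfl]
    exact (inter_nonempty_iff hr' (hR m) _ _).2 hTcm
  set A : Set (Sym2 (Fin (n + 1))) := Sym2.map Fin.castSucc '' G.edgeSet with hAdef
  set B : Set (Sym2 (Fin (n + 1))) :=
    {s(Fin.last n, i.castSucc), s(Fin.last n, m.castSucc)} with hBdef
  have hAsub : A ⊆ H.edgeSet := by
    rintro e ⟨e0, he0, rfl⟩
    induction e0 with
    | h x y =>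
      rw [Sym2.map_pair_eq]
      exact hAdj x y he0
  have hBsub : B ⊆ H.edgeSet := by
    rintro e (rfl | rfl)
    · exact hAdji
    · exact hAdjm
  have hlastA : ∀ e ∈ A, ¬ (Fin.last n ∈ e) := by
    rintro e ⟨e0, he0, rfl⟩ hmem
    induction e0 with
    | h x y =>
      rw [Sym2.map_pair_eq, Sym2.mem_iff] at hmem
      rcases hmem with h | h
      · exact hcastne x h.symm
      · exact hcastne y h.symm
  have hdisj : Disjoint A B := by
    rw [Set.disjoint_left]
    rintro e heA (rfl | rfl)
    · exact hlastA _ heA (Sym2.mem_mk_left _ _)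
    · exact hlastA _ heA (Sym2.mem_mk_left _ _)
  have hAcard : A.ncard = k := by
    rw [hAdef, Set.ncard_image_of_injective _ (Sym2.map.injective (Fin.castSucc_injective n))]
    exact hk
  have hBcard : B.ncard = 2 := by
    apply Set.ncard_pair
    intro h
    rw [Sym2.eq_iff] at h
    rcases h with ⟨-, h⟩ | ⟨h1, h2⟩
    · exact him (Fin.castSucc_injective n h)
    · exact hcastne i h2
  have hcard : (A ∪ B).ncard = k + 2 := by
    rw [Set.ncard_union_eq hdisj (Set.toFinite A) (Set.toFinite B), hAcard, hBcard]
  rw [← hcard]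
  exact Set.ncard_le_ncard (Set.union_subset hAsub hBsub) (Set.toFinite _)
end
end
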